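/- arXiv:2511.05676 — 7 statements merged into one kernel-verified Lean document; each statement's English description precedes it below -/
import Mathlib

section
/- Let S ⊆ P_h be a finite set. Then S is h-admissible if and only if both S and its complement S^c := P_h \ S are h-closed. -/
/-!
If `S = inv_h(π)`, closedness of `S` and of its complement is transitivity of `>` and of `<`
among the values of `π`. Conversely, call `i` forced below `j` when `(i,j) ∈ P_h \ S` or
`(j,i) ∈ S`. The two closedness conditions say exactly that a forced chain `u → m → w` whose
middle index is the largest can be shortcut to `u → w`; removing the largest index of a cycle in
this way shows that the forcing relation is acyclic, and any linear extension of it on `{1,…,n}`,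
`n = j(S)`, is a permutation with `inv_h(π) = S`.
-/

open Finset

/-- The 1-based `k`-th entry (as a value in `{1,…,n}`) of a permutation of `Fin n`. -/
def entry {n : ℕ} (π : Equiv.Perm (Fin n)) (k : ℕ) : ℕ :=
  if hk : k - 1 < n then ((π ⟨k - 1, hk⟩ : Fin n) : ℕ) + 1 else 0

/-- The set of possible h-inversions `P_h = {(i,j) : 0 < i, i < j ≤ h i}`. -/
def Ph (h : ℕ → ℕ) : Set (ℕ × ℕ) := {p | 0 < p.1 ∧ p.1 < p.2 ∧ p.2 ≤ h p.1}

/-- The set of h-inversions of a permutation `π ∈ S_n`, as 1-based pairs: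
`inv_h(π) = {(i,j) : i < j ≤ min(h i, n), π_i > π_j}`. -/
def invh (h : ℕ → ℕ) {n : ℕ} (π : Equiv.Perm (Fin n)) : Finset (ℕ × ℕ) :=
  ((Finset.univ : Finset (Fin n × Fin n)).filter
      (fun p => (p.1 : ℕ) < (p.2 : ℕ) ∧ (p.2 : ℕ) + 1 ≤ h ((p.1 : ℕ) + 1) ∧ π p.2 < π p.1)).image
    (fun p => ((p.1 : ℕ) + 1, (p.2 : ℕ) + 1))

/-- `I_h(S,n)`, the set of permutations of `S_n` with h-inversion set `S`. -/
def Ih (h : ℕ → ℕ) (S : Finset (ℕ × ℕ)) (n : ℕ) : Finset (Equiv.Perm (Fin n)) :=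
  Finset.univ.filter (fun π => invh h π = S)

/-- `𝓘_h(S;n) = #I_h(S,n)`. -/
def Icount (h : ℕ → ℕ) (S : Finset (ℕ × ℕ)) (n : ℕ) : ℕ := (Ih h S n).card

/-- `S` is h-admissible when it is the h-inversion set of some permutation. -/
def Admissible (h : ℕ → ℕ) (S : Finset (ℕ × ℕ)) : Prop := ∃ n, (Ih h S n).Nonempty

/-- `j(S)`, the largest index appearing in a pair of `S`. -/
def jS (S : Finset (ℕ × ℕ)) : ℕ := S.sup Prod.snd

/-- `m(S)`, the maximum descent of `S`. -/
def mS (S : Finset (ℕ × ℕ)) : ℕ := (S.filter fun p => p.2 = p.1 + 1).sup Prod.fst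

/-- `t(σ) = max{σ_k : 1 ≤ k ≤ j(S), h(k) ≥ j(S)+1}`. -/
def tOf (h : ℕ → ℕ) (S : Finset (ℕ × ℕ)) (σ : Equiv.Perm (Fin (jS S))) : ℕ :=
  ((Finset.Icc 1 (jS S)).filter fun k => jS S + 1 ≤ h k).sup (entry σ)

/-- `B_k(S,n)`, the permutations in `I_h(S,n)` with entry `k` in position `h(m(S))`. -/
def Bset (h : ℕ → ℕ) (S : Finset (ℕ × ℕ)) (k n : ℕ) : Finset (Equiv.Perm (Fin n)) :=
  (Ih h S n).filter fun π => entry π (h (mS S)) = k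

/-- The coefficient `b_k(S) = #B_k(S, h(m(S)))`. -/
def bCoeff (h : ℕ → ℕ) (S : Finset (ℕ × ℕ)) (k : ℕ) : ℕ := (Bset h S k (h (mS S))).card

/-- The coefficient `a_k(S)`. -/
def aCoeff (h : ℕ → ℕ) (S : Finset (ℕ × ℕ)) (k : ℕ) : ℕ :=
  ((Ih h S (mS S + h (mS S) - 1)).filter fun π =>
    ((Finset.Icc 1 (mS S)).image (entry π)) ∩ Finset.Icc (h (mS S)) (mS S + h (mS S) - 1)
      = Finset.Icc (h (mS S)) (h (mS S) + k - 1)).card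

/-- The length (number of inversions) of a permutation. -/
def lenPerm {n : ℕ} (π : Equiv.Perm (Fin n)) : ℕ :=
  ((Finset.univ : Finset (Fin n × Fin n)).filter fun p => p.1 < p.2 ∧ π p.2 < π p.1).card

/-- `ℓ_{[a,b]}(A) = #{(x,y) ∈ [a,b]² : x > y, x ∈ A, y ∉ A}`. -/
def lenSet (a b : ℕ) (A : Finset ℕ) : ℕ :=
  ((Finset.Icc a b ×ˢ Finset.Icc a b).filter fun q => q.2 < q.1 ∧ q.1 ∈ A ∧ q.2 ∉ A).card

/-- A subset `T ⊆ P_h` is h-closed if `(i,j) ∈ T`, `(j,k) ∈ T` and `(i,k) ∈ P_h`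
imply `(i,k) ∈ T`. -/
def HClosed (h : ℕ → ℕ) (T : Set (ℕ × ℕ)) : Prop :=
  ∀ i j k : ℕ, (i, j) ∈ T → (j, k) ∈ T → (i, k) ∈ Ph h → (i, k) ∈ T

open Relation

theorem exists_equiv_fin_lt_of_acyclic {α : Type*} [Fintype α] {r : α → α → Prop}
    (hr : ∀ a, ¬ TransGen r a a) {n : ℕ} (hn : Fintype.card α = n) :
    ∃ e : α ≃ Fin n, ∀ a b, r a b → e a < e b := by
  let : IsStrictOrder α (TransGen r) := { irrefl := hr }
  let : PartialOrder α := partialOrderOfSO (TransGen r)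
  let : Fintype (LinearExtension α) := inferInstanceAs (Fintype α)
  let e := (Fintype.orderIsoFinOfCardEq (LinearExtension α) hn).symm
  refine ⟨e.toEquiv, fun a b hab => e.strictMono ?_⟩
  exact toLinearExtension.monotone.strictMono_of_injective (fun _ _ => id) (TransGen.single hab)

def restrictLT (r : ℕ → ℕ → Prop) (k x y : ℕ) : Prop := r x y ∧ x < k ∧ y < k

section PeakShortcut

variable {r : ℕ → ℕ → Prop}

/-- Every visit of a path to the top vertex `k` is bypassed using `hpeak`; the extra step `r u x`
covers paths that start at `k`. -/
theorem transGen_restrictLT_of_succ (hirr : ∀ a, ¬ r a a)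
    (hpeak : ∀ ⦃u m w⦄, u < m → w < m → r u m → r m w → r u w)
    {k x y : ℕ} (hxy : TransGen (restrictLT r (k + 1)) x y) (hy : y < k)
    {u : ℕ} (hu : u < k) (hux : u = x ∨ r u x) : TransGen (restrictLT r k) u y := by
  induction hxy using TransGen.head_induction_on generalizing u with
  | @single x hxy =>
    obtain ⟨rxy, hx, -⟩ := hxy
    rcases hux with rfl | rux
    · exact .single ⟨rxy, hu, hy⟩
    rcases Nat.lt_succ_iff_lt_or_eq.mp hx with hx | rfl
    · exact .head ⟨rux, hu, hx⟩ (.single ⟨rxy, hx, hy⟩)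
    · exact .single ⟨hpeak hu hy rux rxy, hu, hy⟩
  | @head x b hxb _ ih =>
    obtain ⟨rxb, hx, hb⟩ := hxb
    rcases hux with rfl | rux
    · exact ih hu (.inr rxb)
    rcases Nat.lt_succ_iff_lt_or_eq.mp hx with hx | rfl
    · exact .head ⟨rux, hu, hx⟩ (ih hx (.inr rxb))
    · have hbx : b < x := (Nat.lt_succ_iff.mp hb).lt_of_ne fun hbx => hirr x (hbx ▸ rxb)
      exact ih hu (.inr (hpeak hu hbx rux rxb))

theorem not_transGen_restrictLT_self (hirr : ∀ a, ¬ r a a)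
    (hpeak : ∀ ⦃u m w⦄, u < m → w < m → r u m → r m w → r u w) (k a : ℕ) :
    ¬ TransGen (restrictLT r k) a a := by
  induction k generalizing a with
  | zero => exact fun hcyc => (TransGen.head'_iff.mp hcyc).elim fun _ h => by cases h.1.2.1
  | succ k ih =>
    intro hcyc
    by_cases hak : a < k
    · exact ih a (transGen_restrictLT_of_succ hirr hpeak hcyc hak hak (.inl rfl))
    obtain ⟨c, hac, rca, hc, ha⟩ := TransGen.tail'_iff.mp hcyc
    have hca : c ≠ a := fun hca => hirr c (hca ▸ rca)
    have hck : c < k := by omega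
    have hac : TransGen (restrictLT r (k + 1)) a c :=
      (reflTransGen_iff_eq_or_transGen.mp hac).resolve_left hca
    exact ih c (transGen_restrictLT_of_succ hirr hpeak hac hck hck (.inr rca))

end PeakShortcut

theorem exists_fin_val_add_one_eq {n i : ℕ} (hi : 0 < i) (hin : i ≤ n) :
    ∃ a : Fin n, (a : ℕ) + 1 = i :=
  ⟨⟨i - 1, by omega⟩, by simp; omega⟩

theorem entry_succ {n : ℕ} (π : Equiv.Perm (Fin n)) (a : Fin n) : entry π (a + 1) = π a + 1 := by
  simp [entry]

theorem exists_perm_entry_lt {r : ℕ → ℕ → Prop} (hirr : ∀ a, ¬ r a a)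
    (hpeak : ∀ ⦃u m w⦄, u < m → w < m → r u m → r m w → r u w) (n : ℕ) :
    ∃ π : Equiv.Perm (Fin n), ∀ ⦃i j⦄, 0 < i → i ≤ n → 0 < j → j ≤ n → r i j →
      entry π i < entry π j := by
  have hacyc (a : Fin n) : ¬ TransGen (fun a b : Fin n => r (a + 1) (b + 1)) a a :=
    fun hcyc => not_transGen_restrictLT_self hirr hpeak (n + 1) (a + 1) <|
      TransGen.lift (fun a : Fin n => (a : ℕ) + 1)
        (fun a b hab => ⟨hab, Nat.succ_lt_succ a.isLt, Nat.succ_lt_succ b.isLt⟩) a a hcyc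
  obtain ⟨π, hπ⟩ := exists_equiv_fin_lt_of_acyclic hacyc (Fintype.card_fin n)
  refine ⟨π, fun i j hi hin hj hjn hij => ?_⟩
  obtain ⟨a, rfl⟩ := exists_fin_val_add_one_eq hi hin
  obtain ⟨b, rfl⟩ := exists_fin_val_add_one_eq hj hjn
  simpa [entry_succ] using hπ a b hij

/-- `ForcedLT h S i j`: every `π` with `inv_h(π) = S` satisfies `π_i < π_j`. -/
def ForcedLT (h : ℕ → ℕ) (S : Finset (ℕ × ℕ)) (i j : ℕ) : Prop := (i, j) ∈ Ph h \ ↑S ∨ (j, i) ∈ S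

section ForcedLT

variable {h : ℕ → ℕ} {S : Finset (ℕ × ℕ)}

theorem forcedLT_irrefl (hS : ↑S ⊆ Ph h) (i : ℕ) : ¬ ForcedLT h S i i := by
  rintro (⟨⟨-, hii, -⟩, -⟩ | hii)
  · exact hii.false
  · exact (hS hii).2.1.false

theorem forcedLT_of_peak (hS : ↑S ⊆ Ph h) (hS₁ : HClosed h ↑S) (hS₂ : HClosed h (Ph h \ ↑S))
    ⦃u m w : ℕ⦄ (hum : u < m) (hwm : w < m) (rum : ForcedLT h S u m) (rmw : ForcedLT h S m w) :
    ForcedLT h S u w := by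
  obtain ⟨⟨hu, -, (hmu : m ≤ h u)⟩, humS⟩ : (u, m) ∈ Ph h \ ↑S :=
    rum.resolve_right fun h' => (hS h').2.1.asymm hum
  have hwmS : (w, m) ∈ S := rmw.resolve_left fun h' => h'.1.2.1.asymm hwm
  obtain ⟨hw, -, (hmw : m ≤ h w)⟩ := hS hwmS
  rcases lt_trichotomy u w with huw | rfl | hwu
  · exact .inl ⟨⟨hu, huw, hwm.le.trans hmu⟩, fun huwS => humS (hS₁ u w m huwS hwmS ⟨hu, hum, hmu⟩)⟩
  · exact absurd hwmS humS
  · refine .inr (by_contra fun hwuS => ?_)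
    exact (hS₂ w u m ⟨⟨hw, hwu, hum.le.trans hmw⟩, hwuS⟩ ⟨⟨hu, hum, hmu⟩, humS⟩ (hS hwmS)).2 hwmS

end ForcedLT

section Inversions

variable {h : ℕ → ℕ} {n : ℕ}

theorem mem_invh_iff (π : Equiv.Perm (Fin n)) {i j : ℕ} :
    (i, j) ∈ invh h π ↔ (i, j) ∈ Ph h ∧ j ≤ n ∧ entry π j < entry π i := by
  constructor
  · simp only [invh, mem_image, mem_filter, mem_univ, true_and]
    rintro ⟨⟨a, b⟩, ⟨hab, hb, hπ⟩, he⟩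
    dsimp only at hab hb hπ
    simp only [Prod.mk.injEq] at he
    obtain ⟨rfl, rfl⟩ := he
    refine ⟨⟨by omega, by omega, hb⟩, b.isLt, ?_⟩
    simpa [entry_succ] using hπ
  · rintro ⟨⟨hi, hij, hjh⟩, hjn, hlt⟩
    obtain ⟨a, rfl⟩ := exists_fin_val_add_one_eq (n := n) hi (by omega)
    obtain ⟨b, rfl⟩ := exists_fin_val_add_one_eq hij.pos hjn
    simp only [entry_succ] at hlt
    refine mem_image.mpr ⟨(a, b), mem_filter.mpr ⟨mem_univ _, ?_, hjh, ?_⟩, rfl⟩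
    · exact show (a : ℕ) < b by omega
    · exact show π b < π a by omega

theorem hClosed_invh (π : Equiv.Perm (Fin n)) : HClosed h ↑(invh h π) := by
  intro i j k hij hjk hik
  simp only [mem_coe, mem_invh_iff] at hij hjk ⊢
  exact ⟨hik, hjk.2.1, hjk.2.2.trans hij.2.2⟩

theorem hClosed_Ph_diff_invh (π : Equiv.Perm (Fin n)) : HClosed h (Ph h \ ↑(invh h π)) := by
  rintro i j k ⟨hij, hij'⟩ ⟨hjk, hjk'⟩ hik
  refine ⟨hik, fun hik' => ?_⟩
  simp only [mem_coe, mem_invh_iff, not_and, not_lt] at hij' hjk' hik'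
  have hjn : j ≤ n := hjk.2.1.le.trans hik'.2.1
  have := hij' hij hjn
  have := hjk' hjk hik'.2.1
  omega

end Inversions

theorem invh_eq_of_forcedLT {h : ℕ → ℕ} {S : Finset (ℕ × ℕ)} (hS : ↑S ⊆ Ph h)
    {π : Equiv.Perm (Fin (jS S))}
    (hπ : ∀ ⦃i j⦄, 0 < i → i ≤ jS S → 0 < j → j ≤ jS S → ForcedLT h S i j →
      entry π i < entry π j) :
    invh h π = S := by
  ext ⟨i, j⟩
  rw [mem_invh_iff]
  constructor
  · rintro ⟨⟨hi, hij, hjh⟩, hjn, hlt⟩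
    by_contra hijS
    exact (hπ hi (by omega) (by omega) hjn (.inl ⟨⟨hi, hij, hjh⟩, hijS⟩)).asymm hlt
  · intro hijS
    obtain ⟨hi, hij, -⟩ := hS hijS
    have hjn : j ≤ jS S := le_sup (f := Prod.snd) hijS
    exact ⟨hS hijS, hjn, hπ (by omega) hjn hi (by omega) (.inr hijS)⟩

theorem stmt0_general (h : ℕ → ℕ) (S : Finset (ℕ × ℕ)) (hS : ↑S ⊆ Ph h) :
    Admissible h S ↔ HClosed h ↑S ∧ HClosed h (Ph h \ ↑S) := by
  constructor
  · rintro ⟨n, π, hπ⟩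
    obtain rfl : invh h π = S := (mem_filter.mp hπ).2
    exact ⟨hClosed_invh π, hClosed_Ph_diff_invh π⟩
  · rintro ⟨hS₁, hS₂⟩
    obtain ⟨π, hπ⟩ :=
      exists_perm_entry_lt (forcedLT_irrefl hS) (forcedLT_of_peak hS hS₁ hS₂) (jS S)
    exact ⟨jS S, π, mem_filter.mpr ⟨mem_univ π, invh_eq_of_forcedLT hS hπ⟩⟩

/-- A finite set `S ⊆ P_h` is h-admissible iff both `S` and its complement
`P_h \ S` are h-closed. -/
theorem stmt0 (h : ℕ → ℕ) (hmono : ∀ ⦃i j : ℕ⦄, 0 < i → i ≤ j → h i ≤ h j)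
    (hgt : ∀ i : ℕ, 0 < i → i < h i) (S : Finset (ℕ × ℕ)) (hS : ↑S ⊆ Ph h) :
    Admissible h S ↔ HClosed h ↑S ∧ HClosed h (Ph h \ ↑S) :=
  stmt0_general h S hS
end

section
/- Suppose S is a nonempty h-admissible set and let n and k be positive integers such that j(S) ≤ k ≤ n. If π ∈ I_h(S,n), then the flattening π|_k lies in I_h(S,k). -/
open Finset

/-- If `π ∈ I_h(S,n)` and `j(S) ≤ k ≤ n`, then the flattening `π|_k`
(characterized by preserving the relative order of the first `k` entries of `π`)
lies in `I_h(S,k)`. -/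
theorem stmt1 (h : ℕ → ℕ) (hmono : ∀ ⦃i j : ℕ⦄, 0 < i → i ≤ j → h i ≤ h j)
    (hgt : ∀ i : ℕ, 0 < i → i < h i) (S : Finset (ℕ × ℕ)) (hSne : S.Nonempty)
    (hadm : Admissible h S) (n k : ℕ) (hkpos : 0 < k) (hjk : jS S ≤ k) (hkn : k ≤ n)
    (π : Equiv.Perm (Fin n)) (hπ : π ∈ Ih h S n) (σ : Equiv.Perm (Fin k))
    (hσ : ∀ i j : Fin k, σ i < σ j ↔ π (Fin.castLE hkn i) < π (Fin.castLE hkn j)) :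
    σ ∈ Ih h S k := by
  simp only [Ih, Finset.mem_filter, Finset.mem_univ, true_and] at hπ ⊢
  rw [← hπ]
  ext ⟨x, y⟩
  simp only [invh, Finset.mem_image, Finset.mem_filter, Finset.mem_univ, true_and,
    Prod.exists, Prod.mk.injEq]
  constructor
  · rintro ⟨i, j, ⟨hij, hjh, hlt⟩, hx, hy⟩
    exact ⟨Fin.castLE hkn i, Fin.castLE hkn j, ⟨hij, hjh, (hσ j i).mp hlt⟩, hx, hy⟩
  · rintro ⟨a, b, ⟨hab, hbh, hlt⟩, hx, hy⟩
    have hbS : ((a : ℕ) + 1, (b : ℕ) + 1) ∈ S := by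
      rw [← hπ]
      simp only [invh, Finset.mem_image, Finset.mem_filter, Finset.mem_univ, true_and,
        Prod.exists, Prod.mk.injEq]
      exact ⟨a, b, ⟨hab, hbh, hlt⟩, rfl, rfl⟩
    have hbk : (b : ℕ) < k := by
      have h1 : (b : ℕ) + 1 ≤ jS S := Finset.le_sup (f := Prod.snd) hbS
      omega
    have hak : (a : ℕ) < k := lt_trans hab hbk
    refine ⟨⟨a, hak⟩, ⟨b, hbk⟩, ⟨hab, hbh, ?_⟩, hx, hy⟩
    exact (hσ ⟨b, hbk⟩ ⟨a, hak⟩).mpr hlt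
end

section
/- For a nonempty h-admissible set S, the value j(S) is the smallest positive integer n such that I_h(S,n) is nonempty; that is, I_h(S, j(S)) ≠ ∅ and I_h(S,n) = ∅ for all n < j(S). -/
open Finset

lemma invh_snd_le (h : ℕ → ℕ) {n : ℕ} (π : Equiv.Perm (Fin n)) {p : ℕ × ℕ}
    (hp : p ∈ invh h π) : p.2 ≤ n := by
  simp only [invh, Finset.mem_image, Finset.mem_filter] at hp
  obtain ⟨q, _, rfl⟩ := hp
  exact q.2.isLt

lemma jS_le_of_mem (h : ℕ → ℕ) (S : Finset (ℕ × ℕ)) {n : ℕ} {π : Equiv.Perm (Fin n)}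
    (hπ : π ∈ Ih h S n) : jS S ≤ n := by
  rw [Ih, Finset.mem_filter] at hπ
  refine Finset.sup_le fun p hp => ?_
  exact invh_snd_le h π (hπ.2 ▸ hp)

lemma step_down (h : ℕ → ℕ) (S : Finset (ℕ × ℕ)) (m : ℕ) (hm : jS S ≤ m)
    (hne : (Ih h S (m + 1)).Nonempty) : (Ih h S m).Nonempty := by
  obtain ⟨π, hπ⟩ := hne
  rw [Ih, Finset.mem_filter] at hπ
  have hS : invh h π = S := hπ.2
  set v : Fin (m + 1) := π (Fin.last m) with hv
  have hnev : ∀ i : Fin m, ((π i.castSucc : Fin (m+1)) : ℕ) ≠ (v : ℕ) := by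
    intro i hi
    have : i.castSucc = Fin.last m := π.injective (Fin.ext hi)
    have := congrArg Fin.val this
    simp [Fin.val_last] at this
    omega
  have hfbound : ∀ i : Fin m,
      (if ((π i.castSucc : Fin (m+1)) : ℕ) < (v : ℕ) then ((π i.castSucc : Fin (m+1)) : ℕ)
        else ((π i.castSucc : Fin (m+1)) : ℕ) - 1) < m := by
    intro i
    have h1 := (π i.castSucc).isLt
    have h2 := v.isLt
    have h3 := hnev i
    split_ifs <;> omega
  set f : Fin m → Fin m := fun i => ⟨_, hfbound i⟩ with hf
  have hmono' : ∀ a b : Fin m, f a < f b ↔ π a.castSucc < π b.castSucc := by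
    intro a b
    have h3 := hnev a; have h4 := hnev b
    simp only [hf, Fin.lt_def]
    split_ifs <;> omega
  have hinj : Function.Injective f := by
    intro a b hab
    have : ¬ f a < f b ∧ ¬ f b < f a := by rw [hab]; exact ⟨lt_irrefl _, lt_irrefl _⟩
    rw [hmono' a b] at this; rw [hmono' b a] at this
    have : π a.castSucc = π b.castSucc := le_antisymm (not_lt.mp this.2) (not_lt.mp this.1)
    exact Fin.castSucc_injective m (π.injective this)
  have hbij : Function.Bijective f := Finite.injective_iff_bijective.mp hinj
  set π' : Equiv.Perm (Fin m) := Equiv.ofBijective f hbij with hπ'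
  have happ : ∀ i : Fin m, π' i = f i := fun i => rfl
  refine ⟨π', Finset.mem_filter.mpr ⟨Finset.mem_univ _, ?_⟩⟩
  rw [← hS]
  ext ⟨x, y⟩
  simp only [invh, Finset.mem_image, Finset.mem_filter, Finset.mem_univ, true_and,
    Prod.ext_iff, Prod.exists]
  constructor
  · rintro ⟨a, b, ⟨hab, hbh, hlt⟩, hx, hy⟩
    refine ⟨a.castSucc, b.castSucc, ⟨?_, ?_, ?_⟩, ?_, ?_⟩
    · simpa using hab
    · simpa using hbh
    · rw [happ, happ, hmono'] at hlt; exact hlt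
    · simpa using hx
    · simpa using hy
  · rintro ⟨a, b, ⟨hab, hbh, hlt⟩, hx, hy⟩
    have hblast : (b : ℕ) ≠ m := by
      intro hbm
      have hmem : ((a : ℕ) + 1, (b : ℕ) + 1) ∈ invh h π := by
        simp only [invh, Finset.mem_image, Finset.mem_filter, Finset.mem_univ, true_and]
        exact ⟨(a, b), ⟨hab, hbh, hlt⟩, rfl⟩
      have : (b : ℕ) + 1 ≤ jS S :=
        Finset.le_sup (f := Prod.snd) (hS ▸ hmem)
      omega
    have hb : (b : ℕ) < m := lt_of_le_of_ne (Nat.lt_succ_iff.mp b.isLt) hblast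
    have ha : (a : ℕ) < m := lt_trans hab hb
    refine ⟨⟨a, ha⟩, ⟨b, hb⟩, ⟨hab, hbh, ?_⟩, hx, hy⟩
    rw [happ, happ, hmono']
    have h1 : (⟨(a : ℕ), ha⟩ : Fin m).castSucc = a := Fin.ext rfl
    have h2 : (⟨(b : ℕ), hb⟩ : Fin m).castSucc = b := Fin.ext rfl
    rw [h1, h2]; exact hlt

lemma down_to (h : ℕ → ℕ) (S : Finset (ℕ × ℕ)) :
    ∀ N, jS S ≤ N → (Ih h S N).Nonempty → (Ih h S (jS S)).Nonempty := by
  intro N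
  induction N with
  | zero => intro hle hne; rwa [Nat.le_zero.mp hle]
  | succ m ih =>
    intro hle hne
    rcases Nat.lt_or_ge (jS S) (m + 1) with hlt | hge
    · exact ih (Nat.lt_succ_iff.mp hlt) (step_down h S m (Nat.lt_succ_iff.mp hlt) hne)
    · rwa [le_antisymm hle hge]

/-- `j(S)` is the smallest `n` with `I_h(S,n)` nonempty. -/
theorem stmt2 (h : ℕ → ℕ) (hmono : ∀ ⦃i j : ℕ⦄, 0 < i → i ≤ j → h i ≤ h j)
    (hgt : ∀ i : ℕ, 0 < i → i < h i) (S : Finset (ℕ × ℕ)) (hSne : S.Nonempty)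
    (hadm : Admissible h S) :
    (Ih h S (jS S)).Nonempty ∧ ∀ n : ℕ, n < jS S → Ih h S n = ∅ := by
  obtain ⟨N, hN⟩ := hadm
  obtain ⟨π, hπ⟩ := hN
  have hjN : jS S ≤ N := jS_le_of_mem h S hπ
  constructor
  · exact down_to h S N hjN ⟨π, hπ⟩
  · intro n hn
    by_contra hne
    obtain ⟨σ, hσ⟩ := Finset.nonempty_of_ne_empty hne
    exact absurd (jS_le_of_mem h S hσ) (not_le.mpr hn)
end

section
/- Let S be a nonempty h-admissible set, let n ≥ j(S), and let σ ∈ I_h(S, j(S)). Define t(σ) := max{σ_k : 1 ≤ k ≤ j(S) and h(k) ≥ j(S)+1}. Then the number of permutations π ∈ I_h(S,n) whose flattening satisfies π|_{j(S)} = σ equals the binomial coefficient C(n − t(σ), n − j(S)). -/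
open Finset

/-!
A permutation `π ∈ S_n` that flattens to `σ` on its first `j = j(S)` positions and increases on
the remaining ones is determined by the set `B` of values it takes there, and every
`(n − j)`-subset `B` arises. Because `σ` already carries all h-inversions inside `[1, j]` and
no pair of `S` ends after `j`, `inv_h(π) = S` says that `π` has no h-inversion ending after `j`.
As `h(i) > i`, this makes `π` increase after `j`, and what remains is that all of `B` exceeds
`π_k` for every `k ≤ j` with `h(k) > j`. The largest such `π_k` is the `t(σ)`-th smallest value
outside `B`, so the condition reads `B ⊆ {t(σ) + 1, …, n}`, leaving `C(n − t(σ), n − j)` choices.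
-/

open Equiv

theorem Fin.val_le_val_of_strictMono {k n : ℕ} {f : Fin k → Fin n} (hf : StrictMono f)
    (i : Fin k) : (i : ℕ) ≤ f i := by
  have := card_le_card_of_injOn f (s := Iic i) (t := Iic (f i))
    (fun x hx => by simpa using hf.monotone (mem_Iic.1 hx)) hf.injective.injOn
  simpa using this

theorem Fin.card_filter_le_val (n j : ℕ) : #{i : Fin n | j ≤ (i : ℕ)} = n - j := by
  have := card_filter_add_card_filter_not (s := (univ : Finset (Fin n))) (fun i => (i : ℕ) < j)
  simp only [Fin.card_filter_val_lt, not_lt, card_univ, Fintype.card_fin] at this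
  omega

theorem Finset.forall_notMem_orderEmbOfFin_lt_iff {n k : ℕ} (H : Finset (Fin n))
    (hH : H.card = k) (r : Fin k) :
    (∀ y ∉ H, H.orderEmbOfFin hH r < y) ↔ ∀ y ∉ H, (r : ℕ) < y := by
  refine ⟨fun hr y hy => (Fin.val_le_val_of_strictMono (H.orderEmbOfFin hH).strictMono r).trans_lt
    (hr y hy), fun hr y hy => ?_⟩
  by_contra! hle
  have hkn : k ≤ n := by simpa [hH] using card_le_univ H
  -- the `r + 1` values `≤ r` all lie in `H`, below its `r`-th element
  have hsurj : Set.SurjOn (H.orderEmbOfFin hH) (Iio r)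
      (({x : Fin n | (x : ℕ) < r + 1} : Finset (Fin n)) : Set (Fin n)) := by
    intro x hx
    have hxH : x ∈ H := by
      by_contra hxH
      have := hr x hxH
      simp only [coe_filter, mem_univ, true_and, Set.mem_ofPred_eq] at hx
      omega
    obtain ⟨s, rfl⟩ : x ∈ Set.range (H.orderEmbOfFin hH) := by rwa [range_orderEmbOfFin]
    refine ⟨s, mem_Iio.2 ((H.orderEmbOfFin hH).lt_iff_lt.1 ?_), rfl⟩
    have := hr y hy
    simp only [coe_filter, mem_univ, true_and, Set.mem_ofPred_eq] at hx
    exact lt_of_lt_of_le (Fin.lt_def.2 (by omega)) hle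
  have := card_le_card_of_surjOn _ hsurj
  simp only [Fin.card_filter_val_lt, Fin.card_Iio] at this
  omega

theorem Fin.strictMonoOn_tail_of_lt_succ {α : Type*} [Preorder α] {n j : ℕ} {f : Fin n → α}
    (hf : ∀ a b : Fin n, j ≤ (a : ℕ) → (b : ℕ) = a + 1 → f a < f b) :
    StrictMonoOn f {i | j ≤ (i : ℕ)} := by
  rintro a (ha : j ≤ (a : ℕ)) ⟨b, hb⟩ - hab
  have key : ∀ m, (a : ℕ) + 1 ≤ m → ∀ hm : m < n, f a < f ⟨m, hm⟩ := by
    intro m hm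
    induction m, hm using Nat.le_induction with
    | base => exact fun _ => hf _ _ ha rfl
    | succ m hm ih =>
      exact fun _ => (ih (by omega)).trans (hf ⟨m, by omega⟩ _ (by simp only; omega) rfl)
  exact key b hab hb

namespace Flattening

variable {n j : ℕ}

/-- The paper's `π|_j = σ`, with `Fin` indices shifted down by one. -/
def FlattensTo (hjn : j ≤ n) (π : Perm (Fin n)) (σ : Perm (Fin j)) : Prop :=
  ∀ i k : Fin j, σ i < σ k ↔ π (Fin.castLE hjn i) < π (Fin.castLE hjn k)

def tailSet (j : ℕ) (π : Perm (Fin n)) : Finset (Fin n) :=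
  ({i | j ≤ (i : ℕ)} : Finset (Fin n)).image π

theorem apply_mem_tailSet_iff (π : Perm (Fin n)) (i : Fin n) :
    π i ∈ tailSet j π ↔ j ≤ (i : ℕ) := by
  simp [tailSet, π.injective.mem_finset_image]

theorem forall_mem_tailSet_iff (π : Perm (Fin n)) (p : Fin n → Prop) :
    (∀ y ∈ tailSet j π, p y) ↔ ∀ i : Fin n, j ≤ (i : ℕ) → p (π i) := by
  simp [tailSet]

theorem card_tailSet (π : Perm (Fin n)) : (tailSet j π).card = n - j := by
  rw [tailSet, card_image_of_injective _ π.injective, Fin.card_filter_le_val]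

theorem card_compl_of_card_eq (hjn : j ≤ n) {B : Finset (Fin n)} (hB : B.card = n - j) :
    Bᶜ.card = j := by
  rw [card_compl, hB, Fintype.card_fin]
  omega

theorem FlattensTo.apply_castLE {hjn : j ≤ n} {π : Perm (Fin n)} {σ : Perm (Fin j)}
    (hflat : FlattensTo hjn π σ) (i : Fin j) :
    π (Fin.castLE hjn i) =
      (tailSet j π)ᶜ.orderEmbOfFin (card_compl_of_card_eq hjn (card_tailSet π)) (σ i) := by
  have hunique := orderEmbOfFin_unique (card_compl_of_card_eq hjn (card_tailSet π))
    (f := fun x => π (Fin.castLE hjn (σ.symm x)))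
    (fun x => by simp [apply_mem_tailSet_iff])
    (fun x y hxy => (hflat _ _).1 (by simpa using hxy))
  simpa using congrFun hunique (σ i)

theorem apply_eq_orderEmbOfFin_tailSet {π : Perm (Fin n)}
    (hmono : StrictMonoOn π {i | j ≤ (i : ℕ)}) (i : Fin n) (hi : j ≤ (i : ℕ)) :
    π i = (tailSet j π).orderEmbOfFin (card_tailSet π)
      ⟨i - j, Nat.sub_lt_sub_right hi i.isLt⟩ := by
  have hunique := orderEmbOfFin_unique (card_tailSet π)
    (f := fun r : Fin (n - j) => π ⟨j + r, by omega⟩)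
    (fun r => (apply_mem_tailSet_iff π _).2 (Nat.le_add_right j r))
    (fun r s hrs => hmono (Nat.le_add_right j r) (Nat.le_add_right j s)
      (Fin.lt_def.2 (Nat.add_lt_add_left hrs j)))
  rw [← congrFun hunique]
  congr 1
  ext
  simp only
  omega

noncomputable def merge (hjn : j ≤ n) (σ : Perm (Fin j)) (B : Finset (Fin n))
    (hB : B.card = n - j) : Perm (Fin n) :=
  Equiv.ofBijective
    (fun i => if hi : (i : ℕ) < j then
      Bᶜ.orderEmbOfFin (card_compl_of_card_eq hjn hB) (σ ⟨i, hi⟩)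
      else B.orderEmbOfFin hB ⟨i - j, by omega⟩)
    (Finite.injective_iff_bijective.1 <| by
      have hc := card_compl_of_card_eq hjn hB
      refine Function.Injective.dite (fun i : Fin n => (i : ℕ) < j)
        (f := fun x => Bᶜ.orderEmbOfFin hc (σ ⟨x.1, x.2⟩))
        (f' := fun x => B.orderEmbOfFin hB ⟨x.1 - j, by omega⟩) ?_ ?_ ?_
      · intro x y hxy
        have := σ.injective ((Bᶜ.orderEmbOfFin hc).injective hxy)
        exact Subtype.ext (Fin.ext (by simpa using this))
      · intro x y hxy
        have := Fin.val_eq_of_eq ((B.orderEmbOfFin hB).injective hxy)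
        have := x.2; have := y.2
        exact Subtype.ext (Fin.ext (by simp only [not_lt] at *; omega))
      · intro x x' hx hx' hxy
        have := Bᶜ.orderEmbOfFin_mem hc (σ ⟨x, hx⟩)
        rw [hxy, mem_compl] at this
        exact this (B.orderEmbOfFin_mem hB _))

section merge

variable (hjn : j ≤ n) {σ : Perm (Fin j)} {B : Finset (Fin n)} (hB : B.card = n - j)

theorem merge_castLE (i : Fin j) :
    merge hjn σ B hB (Fin.castLE hjn i) =
      Bᶜ.orderEmbOfFin (card_compl_of_card_eq hjn hB) (σ i) := by
  simp [merge]

theorem merge_of_le (i : Fin n) (hi : j ≤ (i : ℕ)) :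
    merge hjn σ B hB i = B.orderEmbOfFin hB ⟨i - j, by omega⟩ := by
  simp [merge, not_lt.2 hi]

theorem flattensTo_merge : FlattensTo hjn (merge hjn σ B hB) σ := by
  intro i k
  simp [merge_castLE hjn]

theorem strictMonoOn_merge : StrictMonoOn (merge hjn σ B hB) {i | j ≤ (i : ℕ)} := by
  intro a (ha : j ≤ (a : ℕ)) b (hb : j ≤ (b : ℕ)) hab
  rw [merge_of_le hjn hB a ha, merge_of_le hjn hB b hb, OrderEmbedding.lt_iff_lt, Fin.mk_lt_mk]
  have := Fin.lt_def.1 hab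
  omega

theorem tailSet_merge : tailSet j (merge hjn σ B hB) = B := by
  refine eq_of_subset_of_card_le (fun y hy => ?_) (by rw [card_tailSet, hB])
  obtain ⟨i, hi, rfl⟩ := mem_image.1 hy
  simp only [mem_filter, mem_univ, true_and] at hi
  rw [merge_of_le hjn hB i hi]
  exact B.orderEmbOfFin_mem hB _

end merge

theorem eq_merge_tailSet {hjn : j ≤ n} {σ : Perm (Fin j)} {π : Perm (Fin n)}
    (hflat : FlattensTo hjn π σ) (hmono : StrictMonoOn π {i | j ≤ (i : ℕ)}) :
    π = merge hjn σ (tailSet j π) (card_tailSet π) := by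
  ext1 i
  by_cases hi : (i : ℕ) < j
  · rw [show i = Fin.castLE hjn ⟨i, hi⟩ from rfl, merge_castLE hjn, hflat.apply_castLE]
  · rw [merge_of_le hjn _ i (by omega), apply_eq_orderEmbOfFin_tailSet hmono i (by omega)]

theorem card_flattensTo_strictMonoOn (hjn : j ≤ n) (σ : Perm (Fin j))
    (P : Finset (Fin n) → Prop) :
    Nat.card {π : Perm (Fin n) //
        FlattensTo hjn π σ ∧ StrictMonoOn π {i | j ≤ (i : ℕ)} ∧ P (tailSet j π)} =
      Nat.card {B : Finset (Fin n) // B.card = n - j ∧ P B} :=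
  Nat.card_congr
    { toFun := fun π => ⟨tailSet j π.1, card_tailSet π.1, π.2.2.2⟩
      invFun := fun B => ⟨merge hjn σ B B.2.1, flattensTo_merge hjn B.2.1,
        strictMonoOn_merge hjn B.2.1, (tailSet_merge hjn B.2.1).symm ▸ B.2.2⟩
      left_inv := fun π => Subtype.ext (eq_merge_tailSet π.2.1 π.2.2.1).symm
      right_inv := fun B => Subtype.ext (tailSet_merge hjn B.2.1) }

end Flattening

open Flattening

theorem mem_invh {h : ℕ → ℕ} {n : ℕ} (π : Perm (Fin n)) (x y : ℕ) :
    (x, y) ∈ invh h π ↔ ∃ a b : Fin n, ((a : ℕ) < b ∧ (b : ℕ) + 1 ≤ h (a + 1) ∧ π b < π a) ∧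
      (a : ℕ) + 1 = x ∧ (b : ℕ) + 1 = y := by
  simp [invh, Prod.ext_iff]

theorem invh_eq_iff_of_flattensTo {h : ℕ → ℕ} {n j : ℕ} {hjn : j ≤ n} {S : Finset (ℕ × ℕ)}
    {σ : Perm (Fin j)} {π : Perm (Fin n)} (hσ : invh h σ = S) (hS : ∀ p ∈ S, p.2 ≤ j)
    (hflat : FlattensTo hjn π σ) :
    invh h π = S ↔ ∀ a b : Fin n, a < b → j ≤ (b : ℕ) → (b : ℕ) + 1 ≤ h (a + 1) → π a < π b := by
  constructor
  · intro hπ a b hab hjb hb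
    by_contra! hba
    have hmem : ((a : ℕ) + 1, (b : ℕ) + 1) ∈ S :=
      hπ ▸ (mem_invh π _ _).2 ⟨a, b, ⟨hab, hb, hba.lt_of_ne (π.injective.ne hab.ne')⟩, rfl, rfl⟩
    have := hS _ hmem
    omega
  · intro hcross
    ext ⟨x, y⟩
    rw [← hσ, mem_invh, mem_invh]
    constructor
    · rintro ⟨a, b, ⟨hab, hb, hba⟩, rfl, rfl⟩
      have hbj : (b : ℕ) < j := by
        by_contra! hjb
        exact (hcross a b hab hjb hb).not_gt hba
      refine ⟨⟨a, by omega⟩, ⟨b, hbj⟩, ⟨hab, hb, (hflat _ _).2 hba⟩, rfl, rfl⟩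
    · rintro ⟨a, b, ⟨hab, hb, hba⟩, rfl, rfl⟩
      exact ⟨Fin.castLE hjn a, Fin.castLE hjn b, ⟨hab, hb, (hflat _ _).1 hba⟩, rfl, rfl⟩

theorem forall_crossing_lt_iff {α : Type*} [Preorder α] {h : ℕ → ℕ}
    (hgt : ∀ i : ℕ, 0 < i → i < h i) {n j : ℕ} (hjn : j ≤ n) (f : Fin n → α) :
    (∀ a b : Fin n, a < b → j ≤ (b : ℕ) → (b : ℕ) + 1 ≤ h (a + 1) → f a < f b) ↔
      StrictMonoOn f {i | j ≤ (i : ℕ)} ∧ ∀ a : Fin j, j + 1 ≤ h (a + 1) →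
        ∀ b : Fin n, j ≤ (b : ℕ) → f (Fin.castLE hjn a) < f b := by
  constructor
  · intro hcross
    have hmono : StrictMonoOn f {i | j ≤ (i : ℕ)} :=
      Fin.strictMonoOn_tail_of_lt_succ fun a b ha hb =>
        hcross a b (Fin.lt_def.2 (by omega)) (by omega) (by have := hgt (a + 1); omega)
    refine ⟨hmono, fun a ha b hb => ?_⟩
    -- pass through the first tail position `j`
    let c : Fin n := ⟨j, by omega⟩
    exact (hcross _ c (Fin.lt_def.2 a.isLt) le_rfl ha).trans_le
      (hmono.monotoneOn (le_refl j) hb (Fin.le_def.2 hb))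
  · rintro ⟨hmono, hhead⟩ a b hab hjb hb
    by_cases ha : (a : ℕ) < j
    · exact hhead ⟨a, ha⟩ ((Nat.succ_le_succ hjb).trans hb) b hjb
    · exact hmono (not_lt.1 ha) hjb hab

theorem tOf_le_iff (h : ℕ → ℕ) (S : Finset (ℕ × ℕ)) (σ : Perm (Fin (jS S))) (c : ℕ) :
    tOf h S σ ≤ c ↔ ∀ a : Fin (jS S), jS S + 1 ≤ h (a + 1) → (σ a : ℕ) + 1 ≤ c := by
  rw [tOf, Finset.sup_le_iff]
  constructor
  · intro H a ha
    simpa [entry] using H (a + 1) (by simp; omega)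
  · intro H k hk
    simp only [mem_filter, mem_Icc] at hk
    have := H ⟨k - 1, by omega⟩ (by simpa [Nat.sub_add_cancel hk.1.1] using hk.2)
    simpa [entry, show k - 1 < jS S by omega] using this

theorem mem_Ih_and_flattensTo_iff {h : ℕ → ℕ} (hgt : ∀ i : ℕ, 0 < i → i < h i)
    {S : Finset (ℕ × ℕ)} {n : ℕ} (hn : jS S ≤ n) {σ : Perm (Fin (jS S))}
    (hσ : σ ∈ Ih h S (jS S)) (π : Perm (Fin n)) :
    π ∈ Ih h S n ∧ FlattensTo hn π σ ↔ FlattensTo hn π σ ∧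
      StrictMonoOn π {i | jS S ≤ (i : ℕ)} ∧ ∀ y ∈ tailSet (jS S) π, tOf h S σ ≤ y := by
  rw [and_comm, and_congr_right_iff]
  intro hflat
  have hσS : invh h σ = S := (mem_filter.1 hσ).2
  have hS : ∀ p ∈ S, p.2 ≤ jS S := fun p hp => le_sup hp
  simp only [Ih, mem_filter, mem_univ, true_and]
  rw [invh_eq_iff_of_flattensTo hσS hS hflat, forall_crossing_lt_iff hgt hn,
    and_congr_right_iff]
  intro hmono
  have hrank := fun r => (tailSet (jS S) π)ᶜ.forall_notMem_orderEmbOfFin_lt_iff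
    (card_compl_of_card_eq hn (card_tailSet π)) r
  simp only [mem_compl, not_not] at hrank
  simp only [← forall_mem_tailSet_iff, hflat.apply_castLE, hrank, tOf_le_iff]
  exact ⟨fun H y hy a ha => H a ha y hy, fun H a ha y hy => H y hy a ha⟩

theorem card_finset_card_eq_and_forall_le (n m t : ℕ) :
    Nat.card {B : Finset (Fin n) // B.card = m ∧ ∀ y ∈ B, t ≤ (y : ℕ)} =
      (n - t).choose m := by
  have hB : ∀ B : Finset (Fin n), (B.card = m ∧ ∀ y ∈ B, t ≤ (y : ℕ)) ↔
      B ∈ ({i | t ≤ (i : ℕ)} : Finset (Fin n)).powersetCard m := by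
    intro B
    simp [mem_powersetCard, subset_iff, and_comm]
  rw [Nat.card_congr (Equiv.subtypeEquivRight hB), Nat.card_eq_fintype_card, Fintype.card_coe,
    card_powersetCard, Fin.card_filter_le_val]

theorem stmt3_general (h : ℕ → ℕ)
    (hgt : ∀ i : ℕ, 0 < i → i < h i) (S : Finset (ℕ × ℕ))
    (n : ℕ) (hn : jS S ≤ n)
    (σ : Equiv.Perm (Fin (jS S))) (hσ : σ ∈ Ih h S (jS S)) :
    Nat.card {π : Equiv.Perm (Fin n) // π ∈ Ih h S n ∧
        ∀ i j : Fin (jS S), σ i < σ j ↔ π (Fin.castLE hn i) < π (Fin.castLE hn j)} =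
      Nat.choose (n - tOf h S σ) (n - jS S) := by
  refine (Nat.card_congr (subtypeEquivRight (mem_Ih_and_flattensTo_iff hgt hn hσ))).trans ?_
  rw [card_flattensTo_strictMonoOn hn σ (fun B => ∀ y ∈ B, tOf h S σ ≤ (y : ℕ)),
    card_finset_card_eq_and_forall_le]

/-- The number of `π ∈ I_h(S,n)` flattening to a given `σ ∈ I_h(S, j(S))`
is `C(n − t(σ), n − j(S))`. -/
theorem stmt3 (h : ℕ → ℕ) (hmono : ∀ ⦃i j : ℕ⦄, 0 < i → i ≤ j → h i ≤ h j)
    (hgt : ∀ i : ℕ, 0 < i → i < h i) (S : Finset (ℕ × ℕ)) (hSne : S.Nonempty)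
    (hadm : Admissible h S) (n : ℕ) (hn : jS S ≤ n)
    (σ : Equiv.Perm (Fin (jS S))) (hσ : σ ∈ Ih h S (jS S)) :
    Nat.card {π : Equiv.Perm (Fin n) // π ∈ Ih h S n ∧
        ∀ i j : Fin (jS S), σ i < σ j ↔ π (Fin.castLE hn i) < π (Fin.castLE hn j)} =
      Nat.choose (n - tOf h S σ) (n - jS S) :=
  stmt3_general h hgt S n hn σ hσ
end

section
/- Let S be a nonempty h-admissible set. For each n ≥ j(S), the count 𝓘_h(S;n) := #I_h(S,n) satisfies 𝓘_h(S;n) = Σ_{σ ∈ I_h(S, j(S))} C(n − t(σ), j(S) − t(σ)), where for each σ ∈ I_h(S, j(S)) one sets t(σ) := max{σ_k : 1 ≤ k ≤ j(S) and h(k) ≥ j(S)+1}. -/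
open Finset

namespace Stmt4Aux

open Finset Equiv

lemma mem_invh {h : ℕ → ℕ} {n : ℕ} {π : Equiv.Perm (Fin n)} {p : ℕ × ℕ} :
    p ∈ invh h π ↔ ∃ a b : Fin n, (a : ℕ) < (b : ℕ) ∧ (b : ℕ) + 1 ≤ h ((a : ℕ) + 1) ∧
      π b < π a ∧ p.1 = (a : ℕ) + 1 ∧ p.2 = (b : ℕ) + 1 := by
  unfold invh
  simp only [Finset.mem_image, Finset.mem_filter, Finset.mem_univ, true_and, Prod.exists,
    Prod.ext_iff]
  constructor
  · rintro ⟨a, b, ⟨h1, h2, h3⟩, h4, h5⟩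
    exact ⟨a, b, h1, h2, h3, h4.symm, h5.symm⟩
  · rintro ⟨a, b, h1, h2, h3, h4, h5⟩
    exact ⟨a, b, ⟨h1, h2, h3⟩, h4.symm, h5.symm⟩

lemma S_shape {h : ℕ → ℕ} {S : Finset (ℕ × ℕ)} (hadm : Admissible h S) :
    ∀ p ∈ S, 1 ≤ p.1 ∧ p.1 < p.2 ∧ p.2 ≤ h p.1 ∧ p.2 ≤ jS S := by
  obtain ⟨m, π, hπ⟩ := hadm
  simp only [Ih, Finset.mem_filter, Finset.mem_univ, true_and] at hπ
  intro p hp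
  have h2 : p.2 ≤ jS S := Finset.le_sup hp
  rw [← hπ] at hp
  obtain ⟨a, b, h1, hb, -, e1, e2⟩ := mem_invh.mp hp
  refine ⟨by omega, by omega, ?_, h2⟩
  rw [e1, e2]; exact hb

lemma invh_eq_iff {h : ℕ → ℕ} {n : ℕ} (π : Equiv.Perm (Fin n)) (S : Finset (ℕ × ℕ))
    (hS : ∀ p ∈ S, 1 ≤ p.1 ∧ p.1 < p.2 ∧ p.2 ≤ h p.1 ∧ p.2 ≤ n) :
    invh h π = S ↔ ∀ a b : Fin n, (a : ℕ) < (b : ℕ) → (b : ℕ) + 1 ≤ h ((a : ℕ) + 1) →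
      (π b < π a ↔ ((a : ℕ) + 1, (b : ℕ) + 1) ∈ S) := by
  constructor
  · intro he a b hab hhb
    constructor
    · intro hlt; rw [← he]; exact mem_invh.mpr ⟨a, b, hab, hhb, hlt, rfl, rfl⟩
    · intro hmem
      rw [← he] at hmem
      obtain ⟨a', b', -, -, hlt, e1, e2⟩ := mem_invh.mp hmem
      have ha : a' = a := Fin.ext (by simp only at e1; omega)
      have hb : b' = b := Fin.ext (by simp only at e2; omega)
      rw [ha, hb] at hlt; exact hlt
  · intro hc
    ext p
    constructor
    · intro hp
      obtain ⟨a, b, hab, hhb, hlt, e1, e2⟩ := mem_invh.mp hp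
      have hpe : p = ((a : ℕ) + 1, (b : ℕ) + 1) := Prod.ext e1 e2
      rw [hpe]
      exact (hc a b hab hhb).mp hlt
    · intro hp
      obtain ⟨h1, h2, h3, h4⟩ := hS p hp
      set a : Fin n := ⟨p.1 - 1, by omega⟩ with hadef
      set b : Fin n := ⟨p.2 - 1, by omega⟩ with hbdef
      have ea : (a : ℕ) + 1 = p.1 := by simp [hadef]; omega
      have eb : (b : ℕ) + 1 = p.2 := by simp [hbdef]; omega
      have hab : (a : ℕ) < (b : ℕ) := by omega
      have hhb : (b : ℕ) + 1 ≤ h ((a : ℕ) + 1) := by rw [ea, eb]; exact h3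
      have hlt := (hc a b hab hhb).mpr (by rw [ea, eb]; exact hp)
      exact mem_invh.mpr ⟨a, b, hab, hhb, hlt, ea.symm, eb.symm⟩

end Stmt4Aux
namespace Stmt4Aux

open Finset Equiv

lemma orderEmb_initial {n k t : ℕ} (s : Finset (Fin n)) (hs : s.card = k)
    (hini : ∀ x : Fin n, (x : ℕ) < t → x ∈ s) {r : ℕ} (hr : r < t) (hrk : r < k) :
    ((s.orderEmbOfFin hs ⟨r, hrk⟩ : Fin n) : ℕ) = r := by
  set e := s.orderEmbOfFin hs with he
  have hmem : ∀ i, e i ∈ s := fun i => s.orderEmbOfFin_mem hs i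
  have hsurj : ∀ x ∈ s, ∃ i, e i = x := by
    intro x hx
    have : x ∈ Set.range e := by rw [he, s.range_orderEmbOfFin hs]; exact hx
    exact this
  have hfil : s.filter (fun x => x < e ⟨r, hrk⟩) = (Finset.Iio (⟨r, hrk⟩ : Fin k)).image e := by
    ext x
    simp only [Finset.mem_filter, Finset.mem_image, Finset.mem_Iio]
    constructor
    · rintro ⟨hxs, hxlt⟩
      obtain ⟨i, rfl⟩ := hsurj x hxs
      exact ⟨i, e.strictMono.lt_iff_lt.mp hxlt, rfl⟩
    · rintro ⟨i, hi, rfl⟩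
      exact ⟨hmem i, e.strictMono hi⟩
  have hcard : (s.filter (fun x => x < e ⟨r, hrk⟩)).card = r := by
    rw [hfil, Finset.card_image_of_injective _ e.injective, Fin.card_Iio]
  by_cases hbig : t ≤ (e ⟨r, hrk⟩ : ℕ)
  · exfalso
    have hsub : Finset.range t ⊆ (s.filter (fun x => x < e ⟨r, hrk⟩)).image Fin.val := by
      intro m hm
      rw [Finset.mem_range] at hm
      have hmn : m < n := lt_of_lt_of_le hm (le_trans hbig (le_of_lt (e ⟨r, hrk⟩).isLt))
      refine Finset.mem_image.mpr ⟨⟨m, hmn⟩, ?_, rfl⟩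
      refine Finset.mem_filter.mpr ⟨hini _ hm, ?_⟩
      rw [Fin.lt_def]
      exact lt_of_lt_of_le hm hbig
    have h1 : t ≤ r := by
      have := Finset.card_le_card hsub
      rw [Finset.card_range] at this
      exact le_trans this (le_trans (Finset.card_image_le) (le_of_eq hcard))
    omega
  · push_neg at hbig
    have hfio : s.filter (fun x => x < e ⟨r, hrk⟩) = Finset.Iio (e ⟨r, hrk⟩) := by
      ext x
      simp only [Finset.mem_filter, Finset.mem_Iio]
      refine ⟨fun hh => hh.2, fun hh => ⟨hini x ?_, hh⟩⟩
      rw [Fin.lt_def] at hh; omega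
    rw [hfio, Fin.card_Iio] at hcard
    exact hcard

lemma rank_eq_self {n k : ℕ} (s : Finset (Fin n)) (hs : s.card = k) (v : Fin n)
    (hini : ∀ x : Fin n, x ≤ v → x ∈ s) :
    ∃ hv : (v : ℕ) < k, s.orderEmbOfFin hs ⟨(v : ℕ), hv⟩ = v := by
  have hsub : Finset.Iic v ⊆ s := fun x hx => hini x (Finset.mem_Iic.mp hx)
  have hcard : (v : ℕ) + 1 ≤ k := by
    have := Finset.card_le_card hsub
    rwa [Fin.card_Iic, hs] at this
  have hv : (v : ℕ) < k := by omega
  refine ⟨hv, Fin.ext ?_⟩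
  exact orderEmb_initial s hs (t := (v : ℕ) + 1)
    (fun x hx => hini x (by rw [Fin.le_def]; omega)) (by omega) hv

lemma image_orderEmbOfFin {α : Type*} [LinearOrder α] {k : ℕ} (s : Finset α) (hs : s.card = k) :
    Finset.univ.image (s.orderEmbOfFin hs) = s := by
  apply Finset.eq_of_subset_of_card_le
  · intro x hx
    obtain ⟨i, -, rfl⟩ := Finset.mem_image.mp hx
    exact s.orderEmbOfFin_mem hs i
  · rw [Finset.card_image_of_injective _ (s.orderEmbOfFin hs).injective, Finset.card_univ,
      Fintype.card_fin, hs]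

lemma orderEmbOfFin_congr {α : Type*} [LinearOrder α] {k : ℕ} {s s' : Finset α} (hss : s = s')
    (hs : s.card = k) (hs' : s'.card = k) (i : Fin k) :
    s.orderEmbOfFin hs i = s'.orderEmbOfFin hs' i := by
  subst hss; rfl

def firstSet {n : ℕ} (j : ℕ) (hn : j ≤ n) (π : Equiv.Perm (Fin n)) : Finset (Fin n) :=
  Finset.univ.image fun i : Fin j => π (Fin.castLE hn i)

lemma card_firstSet {n : ℕ} (j : ℕ) (hn : j ≤ n) (π : Equiv.Perm (Fin n)) :
    (firstSet j hn π).card = j := by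
  rw [firstSet, Finset.card_image_of_injective _
    (fun a b hab => Fin.castLE_injective hn (π.injective hab)), Finset.card_univ,
    Fintype.card_fin]

lemma mem_firstSet_self {n j : ℕ} (hn : j ≤ n) (π : Equiv.Perm (Fin n)) (i : Fin j) :
    π (Fin.castLE hn i) ∈ firstSet j hn π :=
  Finset.mem_image.mpr ⟨i, Finset.mem_univ i, rfl⟩

noncomputable def stdPerm {n : ℕ} (j : ℕ) (hn : j ≤ n) (π : Equiv.Perm (Fin n)) :
    Equiv.Perm (Fin j) :=
  Equiv.ofBijective
    (fun i => ((firstSet j hn π).orderIsoOfFin (card_firstSet j hn π)).symm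
      ⟨π (Fin.castLE hn i), mem_firstSet_self hn π i⟩)
    (Finite.injective_iff_bijective.mp (by
      intro a b hab
      have h1 := congrArg (fun z =>
        ((((firstSet j hn π).orderIsoOfFin (card_firstSet j hn π)) z : Fin n))) hab
      simp only [OrderIso.apply_symm_apply] at h1
      exact Fin.castLE_injective hn (π.injective h1)))

lemma stdPerm_spec {n j : ℕ} (hn : j ≤ n) (π : Equiv.Perm (Fin n)) (i : Fin j) :
    ((firstSet j hn π).orderEmbOfFin (card_firstSet j hn π)) (stdPerm j hn π i)
      = π (Fin.castLE hn i) := by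
  rw [← Finset.coe_orderIsoOfFin_apply]
  show ((((firstSet j hn π).orderIsoOfFin (card_firstSet j hn π))
    (((firstSet j hn π).orderIsoOfFin (card_firstSet j hn π)).symm
      ⟨π (Fin.castLE hn i), mem_firstSet_self hn π i⟩) : Fin n)) = π (Fin.castLE hn i)
  rw [OrderIso.apply_symm_apply]

lemma stdPerm_lt_iff {n j : ℕ} (hn : j ≤ n) (π : Equiv.Perm (Fin n)) (a b : Fin j) :
    stdPerm j hn π a < stdPerm j hn π b ↔ π (Fin.castLE hn a) < π (Fin.castLE hn b) := by
  rw [← stdPerm_spec hn π a, ← stdPerm_spec hn π b]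
  exact ((firstSet j hn π).orderEmbOfFin (card_firstSet j hn π)).lt_iff_lt.symm

lemma stdPerm_eq_of {n j : ℕ} (hn : j ≤ n) (π : Equiv.Perm (Fin n)) (σ : Equiv.Perm (Fin j))
    (hσ : ∀ i, ((firstSet j hn π).orderEmbOfFin (card_firstSet j hn π)) (σ i)
      = π (Fin.castLE hn i)) :
    stdPerm j hn π = σ := by
  apply Equiv.ext; intro i
  exact ((firstSet j hn π).orderEmbOfFin (card_firstSet j hn π)).injective
    ((stdPerm_spec hn π i).trans (hσ i).symm)

end Stmt4Aux
namespace Stmt4Aux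

open Finset Equiv

lemma tOf_le {h : ℕ → ℕ} {S : Finset (ℕ × ℕ)} (σ : Equiv.Perm (Fin (jS S))) :
    tOf h S σ ≤ jS S := by
  apply Finset.sup_le
  intro k hk
  rw [Finset.mem_filter, Finset.mem_Icc] at hk
  rw [entry, dif_pos (show k - 1 < jS S by omega)]
  exact (σ _).isLt

lemma tOf_ge {h : ℕ → ℕ} {S : Finset (ℕ × ℕ)} (σ : Equiv.Perm (Fin (jS S))) (k0 : Fin (jS S))
    (hk0 : jS S + 1 ≤ h ((k0 : ℕ) + 1)) : (σ k0 : ℕ) + 1 ≤ tOf h S σ := by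
  have hmem : (k0 : ℕ) + 1 ∈ (Finset.Icc 1 (jS S)).filter (fun k => jS S + 1 ≤ h k) := by
    rw [Finset.mem_filter, Finset.mem_Icc]
    exact ⟨⟨by omega, by have := k0.isLt; omega⟩, hk0⟩
  have hle := Finset.le_sup (f := entry σ) hmem
  rw [entry, dif_pos (show (k0 : ℕ) + 1 - 1 < jS S by have := k0.isLt; omega)] at hle
  have he : (⟨(k0 : ℕ) + 1 - 1, by have := k0.isLt; omega⟩ : Fin (jS S)) = k0 :=
    Fin.ext (by simp)
  rwa [he] at hle

lemma exists_tOf {h : ℕ → ℕ} {S : Finset (ℕ × ℕ)} (hgt : ∀ i : ℕ, 0 < i → i < h i)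
    (hj1 : 1 ≤ jS S) (σ : Equiv.Perm (Fin (jS S))) :
    ∃ k0 : Fin (jS S), jS S + 1 ≤ h ((k0 : ℕ) + 1) ∧ tOf h S σ = (σ k0 : ℕ) + 1 := by
  have hne : ((Finset.Icc 1 (jS S)).filter (fun k => jS S + 1 ≤ h k)).Nonempty := by
    refine ⟨jS S, ?_⟩
    rw [Finset.mem_filter, Finset.mem_Icc]
    exact ⟨⟨hj1, le_rfl⟩, hgt _ (by omega)⟩
  obtain ⟨k, hk, hsup⟩ := Finset.exists_mem_eq_sup _ hne (entry σ)
  rw [Finset.mem_filter, Finset.mem_Icc] at hk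
  refine ⟨⟨k - 1, by omega⟩, by simpa [show k - 1 + 1 = k by omega] using hk.2, ?_⟩
  rw [tOf, hsup, entry, dif_pos (show k - 1 < jS S by omega)]

lemma tail_mono {h : ℕ → ℕ} {S : Finset (ℕ × ℕ)} {n : ℕ} {π : Equiv.Perm (Fin n)}
    (hgt : ∀ i : ℕ, 0 < i → i < h i)
    (hchar : ∀ a b : Fin n, (a : ℕ) < (b : ℕ) → (b : ℕ) + 1 ≤ h ((a : ℕ) + 1) →
      (π b < π a ↔ ((a : ℕ) + 1, (b : ℕ) + 1) ∈ S))
    (hjmax : ∀ p ∈ S, p.2 ≤ jS S) :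
    ∀ a b : Fin n, jS S ≤ (a : ℕ) → (a : ℕ) < (b : ℕ) → π a < π b := by
  have hadj : ∀ a b : Fin n, jS S ≤ (a : ℕ) → (b : ℕ) = (a : ℕ) + 1 → π a < π b := by
    intro a b ha hb
    have h1 : (b : ℕ) + 1 ≤ h ((a : ℕ) + 1) := by
      have := hgt ((a : ℕ) + 1) (by omega); omega
    have h2 := hchar a b (by omega) h1
    have h3 : ((a : ℕ) + 1, (b : ℕ) + 1) ∉ S := by
      intro hmem
      have := hjmax _ hmem
      simp only at this; omega
    have h4 : ¬ (π b < π a) := fun hh => h3 (h2.mp hh)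
    have h5 : π a ≠ π b := fun he => by
      have := π.injective he
      rw [this] at hb
      omega
    exact lt_of_le_of_ne (not_lt.mp h4) h5
  intro a b ha hab
  obtain ⟨d, hd⟩ : ∃ d, (b : ℕ) = (a : ℕ) + d + 1 := ⟨(b : ℕ) - (a : ℕ) - 1, by omega⟩
  clear hab
  induction d generalizing b with
  | zero => exact hadj a b ha (by omega)
  | succ d ih =>
    have hcn : (a : ℕ) + d + 1 < n := by have := b.isLt; omega
    set c : Fin n := ⟨(a : ℕ) + d + 1, hcn⟩ with hc
    have h1 : π a < π c := ih c rfl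
    have h2 : π c < π b := hadj c b (by simp [hc]; omega) (by simp [hc]; omega)
    exact lt_trans h1 h2

lemma forward_initial {h : ℕ → ℕ} {S : Finset (ℕ × ℕ)} {n : ℕ} {π : Equiv.Perm (Fin n)}
    (hgt : ∀ i : ℕ, 0 < i → i < h i) (hn : jS S ≤ n)
    (hchar : ∀ a b : Fin n, (a : ℕ) < (b : ℕ) → (b : ℕ) + 1 ≤ h ((a : ℕ) + 1) →
      (π b < π a ↔ ((a : ℕ) + 1, (b : ℕ) + 1) ∈ S))
    (hjmax : ∀ p ∈ S, p.2 ≤ jS S)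
    (k0 : Fin (jS S)) (hk0 : jS S + 1 ≤ h ((k0 : ℕ) + 1)) :
    ∀ x : Fin n, x ≤ π (Fin.castLE hn k0) → x ∈ firstSet (jS S) hn π := by
  intro x hx
  by_contra hxA
  have hb : jS S ≤ ((π.symm x : Fin n) : ℕ) := by
    by_contra hlt
    push_neg at hlt
    refine hxA (Finset.mem_image.mpr ⟨⟨((π.symm x : Fin n) : ℕ), hlt⟩, Finset.mem_univ _, ?_⟩)
    have : Fin.castLE hn ⟨((π.symm x : Fin n) : ℕ), hlt⟩ = π.symm x := Fin.ext (by simp)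
    rw [this, Equiv.apply_symm_apply]
  have hjn : jS S < n := lt_of_le_of_lt hb (π.symm x).isLt
  set p : Fin n := ⟨jS S, hjn⟩ with hp
  have h1 : π (Fin.castLE hn k0) < π p := by
    have hc := hchar (Fin.castLE hn k0) p (by simp [hp, k0.isLt]) (by simpa using hk0)
    have hns : (((Fin.castLE hn k0 : Fin n) : ℕ) + 1, ((p : Fin n) : ℕ) + 1) ∉ S := by
      intro hm
      have := hjmax _ hm
      simp only [hp] at this
      omega
    have h4 : ¬ (π p < π (Fin.castLE hn k0)) := fun hh => hns (hc.mp hh)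
    have h5 : π (Fin.castLE hn k0) ≠ π p := fun he => by
      have := π.injective he
      have : ((Fin.castLE hn k0 : Fin n) : ℕ) = (p : ℕ) := congrArg Fin.val this
      simp [hp] at this
      have := k0.isLt; omega
    exact lt_of_le_of_ne (not_lt.mp h4) h5
  have h2 : π p ≤ π (π.symm x) := by
    rcases eq_or_lt_of_le hb with heq | hlt
    · rw [show p = π.symm x from Fin.ext heq]
    · exact le_of_lt (tail_mono hgt hchar hjmax p (π.symm x) le_rfl hlt)
  rw [Equiv.apply_symm_apply] at h2
  exact absurd (lt_of_le_of_lt hx h1) (not_lt.mpr h2)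

end Stmt4Aux
namespace Stmt4Aux

open Finset Equiv

lemma char_of_mem {h : ℕ → ℕ} {S : Finset (ℕ × ℕ)} {n : ℕ} {π : Equiv.Perm (Fin n)}
    (hadm : Admissible h S) (hn : jS S ≤ n) (hπ : π ∈ Ih h S n) :
    ∀ a b : Fin n, (a : ℕ) < (b : ℕ) → (b : ℕ) + 1 ≤ h ((a : ℕ) + 1) →
      (π b < π a ↔ ((a : ℕ) + 1, (b : ℕ) + 1) ∈ S) := by
  have hs := S_shape hadm
  exact (invh_eq_iff π S (fun p hp => ⟨(hs p hp).1, (hs p hp).2.1, (hs p hp).2.2.1,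
    le_trans (hs p hp).2.2.2 hn⟩)).mp ((Finset.mem_filter.mp hπ).2)

lemma mem_Ih_of_char {h : ℕ → ℕ} {S : Finset (ℕ × ℕ)} {n : ℕ} {π : Equiv.Perm (Fin n)}
    (hadm : Admissible h S) (hn : jS S ≤ n)
    (hchar : ∀ a b : Fin n, (a : ℕ) < (b : ℕ) → (b : ℕ) + 1 ≤ h ((a : ℕ) + 1) →
      (π b < π a ↔ ((a : ℕ) + 1, (b : ℕ) + 1) ∈ S)) :
    π ∈ Ih h S n := by
  have hs := S_shape hadm
  rw [Ih, Finset.mem_filter]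
  exact ⟨Finset.mem_univ _, (invh_eq_iff π S (fun p hp => ⟨(hs p hp).1, (hs p hp).2.1,
    (hs p hp).2.2.1, le_trans (hs p hp).2.2.2 hn⟩)).mpr hchar⟩

lemma std_mem {h : ℕ → ℕ} {S : Finset (ℕ × ℕ)} {n : ℕ} {π : Equiv.Perm (Fin n)}
    (hadm : Admissible h S) (hn : jS S ≤ n) (hπ : π ∈ Ih h S n) :
    stdPerm (jS S) hn π ∈ Ih h S (jS S) := by
  have hs := S_shape hadm
  have hchar := char_of_mem hadm hn hπ
  rw [Ih, Finset.mem_filter]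
  refine ⟨Finset.mem_univ _, (invh_eq_iff _ S (fun p hp => ⟨(hs p hp).1, (hs p hp).2.1,
    (hs p hp).2.2.1, (hs p hp).2.2.2⟩)).mpr ?_⟩
  intro a b hab hhb
  have := hchar (Fin.castLE hn a) (Fin.castLE hn b) (by simpa using hab) (by simpa using hhb)
  rw [stdPerm_lt_iff]
  simpa using this

lemma Icc_sub_Aval {h : ℕ → ℕ} {S : Finset (ℕ × ℕ)} {n : ℕ} {π : Equiv.Perm (Fin n)}
    (hgt : ∀ i : ℕ, 0 < i → i < h i) (hadm : Admissible h S) (hj1 : 1 ≤ jS S)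
    (hn : jS S ≤ n) (hπ : π ∈ Ih h S n) :
    Finset.Icc 1 (tOf h S (stdPerm (jS S) hn π)) ⊆
      (firstSet (jS S) hn π).image (fun x : Fin n => (x : ℕ) + 1) := by
  have hs := S_shape hadm
  have hchar := char_of_mem hadm hn hπ
  have hjmax : ∀ p ∈ S, p.2 ≤ jS S := fun p hp => (hs p hp).2.2.2
  obtain ⟨k0, hk0h, hk0t⟩ := exists_tOf hgt hj1 (stdPerm (jS S) hn π)
  have hini := forward_initial hgt hn hchar hjmax k0 hk0h
  obtain ⟨hvlt, hemb⟩ := rank_eq_self _ (card_firstSet (jS S) hn π) (π (Fin.castLE hn k0)) hini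
  have hσk : stdPerm (jS S) hn π k0 = ⟨(π (Fin.castLE hn k0) : ℕ), hvlt⟩ := by
    apply ((firstSet (jS S) hn π).orderEmbOfFin (card_firstSet (jS S) hn π)).injective
    rw [stdPerm_spec, hemb]
  have htv : tOf h S (stdPerm (jS S) hn π) = (π (Fin.castLE hn k0) : ℕ) + 1 := by
    rw [hk0t, hσk]
  intro y hy
  rw [Finset.mem_Icc, htv] at hy
  have hyn : y - 1 < n := by have := (π (Fin.castLE hn k0)).isLt; omega
  refine Finset.mem_image.mpr ⟨⟨y - 1, hyn⟩, hini _ ?_, by simp; omega⟩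
  rw [Fin.le_def]
  simp only [Fin.val_mk]
  omega

lemma fwd_E_mem {h : ℕ → ℕ} {S : Finset (ℕ × ℕ)} {n : ℕ} {π : Equiv.Perm (Fin n)}
    (hgt : ∀ i : ℕ, 0 < i → i < h i) (hadm : Admissible h S) (hj1 : 1 ≤ jS S)
    (hn : jS S ≤ n) (hπ : π ∈ Ih h S n) :
    (firstSet (jS S) hn π).image (fun x : Fin n => (x : ℕ) + 1) \
        Finset.Icc 1 (tOf h S (stdPerm (jS S) hn π))
      ∈ Finset.powersetCard (jS S - tOf h S (stdPerm (jS S) hn π))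
        (Finset.Icc (tOf h S (stdPerm (jS S) hn π) + 1) n) := by
  set t := tOf h S (stdPerm (jS S) hn π) with ht
  have hsub := Icc_sub_Aval hgt hadm hj1 hn hπ
  have htj : t ≤ jS S := tOf_le _
  rw [Finset.mem_powersetCard]
  constructor
  · intro y hy
    rw [Finset.mem_sdiff] at hy
    obtain ⟨hy1, hy2⟩ := hy
    obtain ⟨x, -, rfl⟩ := Finset.mem_image.mp hy1
    rw [Finset.mem_Icc] at hy2 ⊢
    have := x.isLt
    omega
  · rw [Finset.card_sdiff_of_subset hsub,
      Finset.card_image_of_injective _ (fun a b hab => Fin.ext (Nat.succ_injective hab)),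
      card_firstSet, Nat.card_Icc]
    omega

end Stmt4Aux
namespace Stmt4Aux

open Finset Equiv

lemma compl_card_firstSet {n j : ℕ} (hn : j ≤ n) (π : Equiv.Perm (Fin n)) :
    (firstSet j hn π)ᶜ.card = n - j := by
  rw [Finset.card_compl, card_firstSet, Fintype.card_fin]

lemma tail_eq {h : ℕ → ℕ} {S : Finset (ℕ × ℕ)} {n : ℕ} {π : Equiv.Perm (Fin n)}
    (hgt : ∀ i : ℕ, 0 < i → i < h i) (hadm : Admissible h S) (hn : jS S ≤ n)
    (hπ : π ∈ Ih h S n) :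
    ∀ (m : ℕ) (hm : m < n) (hjm : jS S ≤ m),
      π ⟨m, hm⟩ = (firstSet (jS S) hn π)ᶜ.orderEmbOfFin (compl_card_firstSet hn π)
        ⟨m - jS S, by omega⟩ := by
  have hchar := char_of_mem hadm hn hπ
  have hjmax : ∀ p ∈ S, p.2 ≤ jS S := fun p hp => (S_shape hadm p hp).2.2.2
  have hmono := tail_mono hgt hchar hjmax
  set f : Fin (n - jS S) → Fin n :=
    fun k => π ⟨jS S + (k : ℕ), by have := k.isLt; omega⟩ with hf
  have hfs : StrictMono f := by
    intro k k' hk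
    apply hmono
    · simp
    · simp only [Fin.val_mk]
      have : (k : ℕ) < (k' : ℕ) := hk
      omega
  have hfm : ∀ k, f k ∈ (firstSet (jS S) hn π)ᶜ := by
    intro k
    rw [Finset.mem_compl]
    intro hmem
    obtain ⟨i, -, hi⟩ := Finset.mem_image.mp hmem
    have h1 := congrArg Fin.val (π.injective hi)
    simp only [Fin.coe_castLE, Fin.val_mk] at h1
    have := i.isLt
    omega
  have hu := Finset.orderEmbOfFin_unique (compl_card_firstSet hn π) hfm hfs
  intro m hm hjm
  have h2 := congrFun hu ⟨m - jS S, by omega⟩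
  have he : (⟨jS S + (m - jS S), by omega⟩ : Fin n) = ⟨m, hm⟩ := Fin.ext (by simp; omega)
  rw [hf] at h2
  simp only at h2
  rw [he] at h2
  exact h2

lemma inj_aux {h : ℕ → ℕ} {S : Finset (ℕ × ℕ)} {n : ℕ}
    (hgt : ∀ i : ℕ, 0 < i → i < h i) (hadm : Admissible h S) (hj1 : 1 ≤ jS S)
    (hn : jS S ≤ n) {π π' : Equiv.Perm (Fin n)}
    (hπ : π ∈ Ih h S n) (hπ' : π' ∈ Ih h S n)
    (hstd : stdPerm (jS S) hn π = stdPerm (jS S) hn π')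
    (hEe : (firstSet (jS S) hn π).image (fun x : Fin n => (x : ℕ) + 1) \
        Finset.Icc 1 (tOf h S (stdPerm (jS S) hn π))
      = (firstSet (jS S) hn π').image (fun x : Fin n => (x : ℕ) + 1) \
        Finset.Icc 1 (tOf h S (stdPerm (jS S) hn π'))) :
    π = π' := by
  have hAval : (firstSet (jS S) hn π).image (fun x : Fin n => (x : ℕ) + 1)
      = (firstSet (jS S) hn π').image (fun x : Fin n => (x : ℕ) + 1) := by
    have h1 := Finset.union_sdiff_of_subset (Icc_sub_Aval hgt hadm hj1 hn hπ)
    have h2 := Finset.union_sdiff_of_subset (Icc_sub_Aval hgt hadm hj1 hn hπ')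
    rw [← h1, ← h2, hEe, hstd]
  have hFS : firstSet (jS S) hn π = firstSet (jS S) hn π' := by
    ext x
    constructor <;> intro hx
    · have h1 : (x : ℕ) + 1 ∈ (firstSet (jS S) hn π').image (fun x : Fin n => (x : ℕ) + 1) := by
        rw [← hAval]; exact Finset.mem_image.mpr ⟨x, hx, rfl⟩
      obtain ⟨x', hx', he⟩ := Finset.mem_image.mp h1
      rwa [show x' = x from Fin.ext (Nat.succ_injective he)] at hx'
    · have h1 : (x : ℕ) + 1 ∈ (firstSet (jS S) hn π).image (fun x : Fin n => (x : ℕ) + 1) := by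
        rw [hAval]; exact Finset.mem_image.mpr ⟨x, hx, rfl⟩
      obtain ⟨x', hx', he⟩ := Finset.mem_image.mp h1
      rwa [show x' = x from Fin.ext (Nat.succ_injective he)] at hx'
  apply Equiv.ext
  intro x
  by_cases hx : (x : ℕ) < jS S
  · have hxe : Fin.castLE hn ⟨(x : ℕ), hx⟩ = x := Fin.ext (by simp)
    rw [← hxe, ← stdPerm_spec hn π ⟨(x : ℕ), hx⟩, ← stdPerm_spec hn π' ⟨(x : ℕ), hx⟩, hstd]
    exact orderEmbOfFin_congr hFS _ _ _
  · push_neg at hx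
    have h1 := tail_eq hgt hadm hn hπ (x : ℕ) x.isLt hx
    have h2 := tail_eq hgt hadm hn hπ' (x : ℕ) x.isLt hx
    rw [Fin.eta] at h1 h2
    rw [h1, h2]
    exact orderEmbOfFin_congr (by rw [hFS]) _ _ _

end Stmt4Aux
namespace Stmt4Aux

open Finset Equiv

lemma surj_aux {h : ℕ → ℕ} {S : Finset (ℕ × ℕ)} {n : ℕ}
    (hgt : ∀ i : ℕ, 0 < i → i < h i) (hadm : Admissible h S) (hj1 : 1 ≤ jS S)
    (hn : jS S ≤ n) (σ : Equiv.Perm (Fin (jS S))) (hσ : σ ∈ Ih h S (jS S))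
    (E : Finset ℕ)
    (hE : E ∈ Finset.powersetCard (jS S - tOf h S σ) (Finset.Icc (tOf h S σ + 1) n)) :
    ∃ π, π ∈ Ih h S n ∧ stdPerm (jS S) hn π = σ ∧
      (firstSet (jS S) hn π).image (fun x : Fin n => (x : ℕ) + 1) \
        Finset.Icc 1 (tOf h S σ) = E := by
  have hshape := S_shape hadm
  set t := tOf h S σ with htdef
  rw [Finset.mem_powersetCard] at hE
  obtain ⟨hEsub, hEcard⟩ := hE
  have hEIcc : ∀ y ∈ E, t + 1 ≤ y ∧ y ≤ n := by
    intro y hy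
    have := hEsub hy
    rw [Finset.mem_Icc] at this
    exact this
  have htj : t ≤ jS S := tOf_le _
  set V : Finset ℕ := Finset.Icc 1 t ∪ E with hV
  have hVmem : ∀ y ∈ V, 1 ≤ y ∧ y ≤ n := by
    intro y hy
    rcases Finset.mem_union.mp hy with h1 | h2
    · rw [Finset.mem_Icc] at h1
      exact ⟨h1.1, by omega⟩
    · have := hEIcc y h2; omega
  have hVcard : V.card = jS S := by
    rw [hV, Finset.card_union_of_disjoint, Nat.card_Icc, hEcard]
    · omega
    · rw [Finset.disjoint_left]
      intro y hy1 hy2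
      rw [Finset.mem_Icc] at hy1
      have := hEIcc y hy2
      omega
  have hbound : ∀ m ∈ V.image (fun y => y - 1), m < n := by
    intro m hm
    obtain ⟨y, hy, rfl⟩ := Finset.mem_image.mp hm
    have := hVmem y hy
    omega
  set A : Finset (Fin n) := (V.image (fun y => y - 1)).attachFin hbound with hA
  have hmemA : ∀ x : Fin n, x ∈ A ↔ (x : ℕ) + 1 ∈ V := by
    intro x
    rw [hA, Finset.mem_attachFin, Finset.mem_image]
    constructor
    · rintro ⟨y, hy, he⟩
      have := hVmem y hy
      have hyx : y = (x : ℕ) + 1 := by omega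
      rwa [← hyx]
    · intro hx
      exact ⟨(x : ℕ) + 1, hx, by omega⟩
  have hAcard : A.card = jS S := by
    rw [hA, Finset.card_attachFin, Finset.card_image_of_injOn, hVcard]
    intro y hy z hz he
    have h1 := hVmem y (Finset.mem_coe.mp hy)
    have h2 := hVmem z (Finset.mem_coe.mp hz)
    simp only at he
    omega
  have hAcard' : Aᶜ.card = n - jS S := by
    rw [Finset.card_compl, hAcard, Fintype.card_fin]
  have hinit : ∀ x : Fin n, (x : ℕ) < t → x ∈ A := by
    intro x hx
    rw [hmemA]
    exact Finset.mem_union_left _ (Finset.mem_Icc.mpr ⟨by omega, by omega⟩)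
  have hcompl : ∀ x : Fin n, x ∈ Aᶜ → t ≤ (x : ℕ) := by
    intro x hx
    rw [Finset.mem_compl, hmemA] at hx
    by_contra hlt
    push_neg at hlt
    exact hx (Finset.mem_union_left _ (Finset.mem_Icc.mpr ⟨by omega, by omega⟩))
  -- build the permutation
  set f : Fin n → Fin n := fun i =>
    if hi : (i : ℕ) < jS S then A.orderEmbOfFin hAcard (σ ⟨(i : ℕ), hi⟩)
    else Aᶜ.orderEmbOfFin hAcard' ⟨(i : ℕ) - jS S, by have := i.isLt; omega⟩ with hf
  have hfA : ∀ (i : Fin n) (hi : (i : ℕ) < jS S),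
      f i = A.orderEmbOfFin hAcard (σ ⟨(i : ℕ), hi⟩) := by
    intro i hi
    rw [hf]
    exact dif_pos hi
  have hfC : ∀ (i : Fin n) (hi : ¬ ((i : ℕ) < jS S)),
      f i = Aᶜ.orderEmbOfFin hAcard' ⟨(i : ℕ) - jS S, by have := i.isLt; omega⟩ := by
    intro i hi
    rw [hf]
    exact dif_neg hi
  have hinj : Function.Injective f := by
    intro x y he
    by_cases hx : (x : ℕ) < jS S <;> by_cases hy : (y : ℕ) < jS S
    · rw [hfA x hx, hfA y hy] at he
      have h1 := σ.injective ((A.orderEmbOfFin hAcard).injective he)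
      have h2 := congrArg Fin.val h1
      simp only [Fin.val_mk] at h2
      exact Fin.ext h2
    · exfalso
      rw [hfA x hx, hfC y hy] at he
      have h1 := A.orderEmbOfFin_mem hAcard (σ ⟨(x : ℕ), hx⟩)
      have h2 := Aᶜ.orderEmbOfFin_mem hAcard' ⟨(y : ℕ) - jS S, by have := y.isLt; omega⟩
      rw [he] at h1
      exact (Finset.mem_compl.mp h2) h1
    · exfalso
      rw [hfC x hx, hfA y hy] at he
      have h1 := A.orderEmbOfFin_mem hAcard (σ ⟨(y : ℕ), hy⟩)
      have h2 := Aᶜ.orderEmbOfFin_mem hAcard' ⟨(x : ℕ) - jS S, by have := x.isLt; omega⟩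
      rw [he] at h2
      exact (Finset.mem_compl.mp h2) h1
    · rw [hfC x hx, hfC y hy] at he
      have h1 := (Aᶜ.orderEmbOfFin hAcard').injective he
      have h2 := congrArg Fin.val h1
      simp only [Fin.val_mk] at h2
      exact Fin.ext (by omega)
  set π : Equiv.Perm (Fin n) := Equiv.ofBijective f (Finite.injective_iff_bijective.mp hinj)
    with hπdef
  have hπapp : ∀ i, π i = f i := fun i => rfl
  have hσchar := char_of_mem hadm le_rfl hσ
  have hπchar : ∀ a b : Fin n, (a : ℕ) < (b : ℕ) → (b : ℕ) + 1 ≤ h ((a : ℕ) + 1) →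
      (π b < π a ↔ ((a : ℕ) + 1, (b : ℕ) + 1) ∈ S) := by
    intro a b hab hhb
    by_cases hbj : (b : ℕ) < jS S
    · have haj : (a : ℕ) < jS S := lt_trans hab hbj
      rw [hπapp, hπapp, hfA a haj, hfA b hbj, (A.orderEmbOfFin hAcard).lt_iff_lt]
      have := hσchar ⟨(a : ℕ), haj⟩ ⟨(b : ℕ), hbj⟩ hab hhb
      simpa using this
    · have hnotS : ((a : ℕ) + 1, (b : ℕ) + 1) ∉ S := by
        intro hm
        have := (hshape _ hm).2.2.2
        simp only at this
        omega
      have hlt : π a < π b := by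
        by_cases haj : (a : ℕ) < jS S
        · have hK : jS S + 1 ≤ h ((a : ℕ) + 1) := le_trans (by omega) hhb
          have hσa : (σ ⟨(a : ℕ), haj⟩ : ℕ) + 1 ≤ t :=
            tOf_ge σ ⟨(a : ℕ), haj⟩ (by simpa using hK)
          rw [hπapp, hπapp, hfA a haj, hfC b hbj]
          have h1 : ((A.orderEmbOfFin hAcard (σ ⟨(a : ℕ), haj⟩) : Fin n) : ℕ) < t := by
            have h2 := orderEmb_initial A hAcard hinit
              (r := ((σ ⟨(a : ℕ), haj⟩ : Fin (jS S)) : ℕ)) (by omega)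
              (σ ⟨(a : ℕ), haj⟩).isLt
            rw [Fin.eta] at h2
            omega
          have h2 : t ≤ ((Aᶜ.orderEmbOfFin hAcard'
              ⟨(b : ℕ) - jS S, by have := b.isLt; omega⟩ : Fin n) : ℕ) :=
            hcompl _ (Aᶜ.orderEmbOfFin_mem hAcard' _)
          rw [Fin.lt_def]
          omega
        · rw [hπapp, hπapp, hfC a haj, hfC b hbj]
          apply (Aᶜ.orderEmbOfFin hAcard').strictMono
          rw [Fin.lt_def]
          simp only [Fin.val_mk]
          omega
      exact iff_of_false (asymm hlt) hnotS
  have hπmem : π ∈ Ih h S n := mem_Ih_of_char hadm hn hπchar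
  have hFA : firstSet (jS S) hn π = A := by
    ext x
    rw [firstSet, Finset.mem_image]
    constructor
    · rintro ⟨i, -, rfl⟩
      have hi : ((Fin.castLE hn i : Fin n) : ℕ) < jS S := by simp [i.isLt]
      rw [hπapp, hfA _ hi]
      exact A.orderEmbOfFin_mem hAcard _
    · intro hx
      have hr : x ∈ Set.range (A.orderEmbOfFin hAcard) := by
        rw [A.range_orderEmbOfFin hAcard]; exact hx
      obtain ⟨i0, hi0⟩ := hr
      refine ⟨σ.symm i0, Finset.mem_univ _, ?_⟩
      have hi : ((Fin.castLE hn (σ.symm i0) : Fin n) : ℕ) < jS S := by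
        simp [(σ.symm i0).isLt]
      rw [hπapp, hfA _ hi]
      have he : (⟨((Fin.castLE hn (σ.symm i0) : Fin n) : ℕ), hi⟩ : Fin (jS S)) = σ.symm i0 :=
        Fin.ext (by simp)
      rw [he, Equiv.apply_symm_apply]
      exact hi0
  have hstd : stdPerm (jS S) hn π = σ := by
    apply stdPerm_eq_of
    intro i
    rw [orderEmbOfFin_congr hFA (card_firstSet (jS S) hn π) hAcard]
    have hi : ((Fin.castLE hn i : Fin n) : ℕ) < jS S := by simp [i.isLt]
    rw [hπapp, hfA _ hi]
    rfl
  have hAval : A.image (fun x : Fin n => (x : ℕ) + 1) = V := by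
    ext y
    rw [Finset.mem_image]
    constructor
    · rintro ⟨x, hx, rfl⟩
      rwa [hmemA] at hx
    · intro hy
      have := hVmem y hy
      refine ⟨⟨y - 1, by omega⟩, ?_, by simp; omega⟩
      rw [hmemA]
      simp only [Fin.val_mk]
      rwa [show y - 1 + 1 = y by omega]
  refine ⟨π, hπmem, hstd, ?_⟩
  have hdis : Disjoint (Finset.Icc 1 t) E := by
    rw [Finset.disjoint_left]
    intro y hy1 hy2
    rw [Finset.mem_Icc] at hy1
    have := hEIcc y hy2
    omega
  rw [hFA, hAval, hV, Finset.union_sdiff_cancel_left hdis]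

end Stmt4Aux
/-- For `n ≥ j(S)`, `𝓘_h(S;n) = Σ_{σ ∈ I_h(S,j(S))} C(n − t(σ), j(S) − t(σ))`. -/
theorem stmt4 (h : ℕ → ℕ) (hmono : ∀ ⦃i j : ℕ⦄, 0 < i → i ≤ j → h i ≤ h j)
    (hgt : ∀ i : ℕ, 0 < i → i < h i) (S : Finset (ℕ × ℕ)) (hSne : S.Nonempty)
    (hadm : Admissible h S) (n : ℕ) (hn : jS S ≤ n) :
    Icount h S n = ∑ σ ∈ Ih h S (jS S), Nat.choose (n - tOf h S σ) (jS S - tOf h S σ) := by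
  classical
  have hshape := Stmt4Aux.S_shape hadm
  have hj1 : 1 ≤ jS S := by
    obtain ⟨p, hp⟩ := hSne
    have := hshape p hp
    omega
  have hbij : Icount h S n = ((Ih h S (jS S)).sigma (fun σ => Finset.powersetCard
      (jS S - tOf h S σ) (Finset.Icc (tOf h S σ + 1) n))).card := by
    rw [Icount]
    apply Finset.card_bij (fun π _ => (⟨Stmt4Aux.stdPerm (jS S) hn π,
      (Stmt4Aux.firstSet (jS S) hn π).image (fun x : Fin n => (x : ℕ) + 1) \
        Finset.Icc 1 (tOf h S (Stmt4Aux.stdPerm (jS S) hn π))⟩ :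
          Σ _ : Equiv.Perm (Fin (jS S)), Finset ℕ))
    · intro π hπ
      rw [Finset.mem_sigma]
      exact ⟨Stmt4Aux.std_mem hadm hn hπ, Stmt4Aux.fwd_E_mem hgt hadm hj1 hn hπ⟩
    · intro π hπ π' hπ' he
      obtain ⟨h1, h2⟩ := Sigma.mk.inj_iff.mp he
      exact Stmt4Aux.inj_aux hgt hadm hj1 hn hπ hπ' h1 (eq_of_heq h2)
    · rintro ⟨σ, E⟩ hb
      rw [Finset.mem_sigma] at hb
      obtain ⟨π, hπ, hstd, hE⟩ := Stmt4Aux.surj_aux hgt hadm hj1 hn σ hb.1 E hb.2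
      exact ⟨π, hπ, by rw [hstd, hE]⟩
  rw [hbij, Finset.card_sigma]
  apply Finset.sum_congr rfl
  intro σ hσ
  rw [Finset.card_powersetCard, Nat.card_Icc]
  congr 1
  omega
end

section
/- Let S be a nonempty h-admissible set. Then there exists a polynomial p with rational coefficients such that p(n) = 𝓘_h(S;n) for all integers n ≥ j(S). -/
open Finset

section Aux
variable {n j : ℕ}

/-- image of the first `j` positions -/
def headSet (hjn : j ≤ n) (π : Equiv.Perm (Fin n)) : Finset (Fin n) :=
  (univ : Finset (Fin j)).image (fun k => π (Fin.castLE hjn k))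

lemma card_headSet (hjn : j ≤ n) (π : Equiv.Perm (Fin n)) : (headSet hjn π).card = j := by
  rw [headSet, card_image_of_injective _ (fun a b hab =>
    Fin.castLE_injective hjn (π.injective hab)), card_univ, Fintype.card_fin]

lemma mem_headSet (hjn : j ≤ n) (π : Equiv.Perm (Fin n)) (k : Fin j) :
    π (Fin.castLE hjn k) ∈ headSet hjn π := mem_image_of_mem _ (mem_univ k)

/-- the pattern of the first `j` entries -/
noncomputable def ptn (hjn : j ≤ n) (π : Equiv.Perm (Fin n)) : Equiv.Perm (Fin j) :=
  Equiv.ofBijective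
    (fun k => ((headSet hjn π).orderIsoOfFin (card_headSet hjn π)).symm
      ⟨π (Fin.castLE hjn k), mem_headSet hjn π k⟩)
    (Finite.injective_iff_bijective.mp (by
      intro a b hab
      have := ((headSet hjn π).orderIsoOfFin (card_headSet hjn π)).symm.injective hab
      have h2 : π (Fin.castLE hjn a) = π (Fin.castLE hjn b) := congrArg Subtype.val this
      exact Fin.castLE_injective hjn (π.injective h2)))

lemma ptn_spec (hjn : j ≤ n) (π : Equiv.Perm (Fin n)) (k : Fin j) :
    (headSet hjn π).orderEmbOfFin (card_headSet hjn π) (ptn hjn π k) = π (Fin.castLE hjn k) := by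
  have : ptn hjn π k = ((headSet hjn π).orderIsoOfFin (card_headSet hjn π)).symm
      ⟨π (Fin.castLE hjn k), mem_headSet hjn π k⟩ := rfl
  rw [this, ← Finset.coe_orderIsoOfFin_apply, OrderIso.apply_symm_apply]

lemma ptn_lt_iff (hjn : j ≤ n) (π : Equiv.Perm (Fin n)) (k l : Fin j) :
    ptn hjn π k < ptn hjn π l ↔ π (Fin.castLE hjn k) < π (Fin.castLE hjn l) := by
  rw [← ((headSet hjn π).orderEmbOfFin (card_headSet hjn π)).lt_iff_lt, ptn_spec, ptn_spec]


lemma card_compl_fin (A : Finset (Fin n)) : Aᶜ.card = n - A.card := by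
  rw [card_compl, Fintype.card_fin]

/-- build a permutation from a pattern and a value set -/
noncomputable def phi (hjn : j ≤ n) (σ : Equiv.Perm (Fin j)) (A : Finset (Fin n))
    (hA : A.card = j) : Equiv.Perm (Fin n) :=
  Equiv.ofBijective
    (fun x => if hx : (x : ℕ) < j then A.orderEmbOfFin hA (σ ⟨x, hx⟩)
      else Aᶜ.orderEmbOfFin (by rw [card_compl_fin, hA]) ⟨(x:ℕ) - j, by omega⟩)
    (Finite.injective_iff_bijective.mp (by
      intro a b hab
      dsimp only at hab
      split_ifs at hab with h1 h2 h2
      · have h3 := σ.injective ((A.orderEmbOfFin hA).injective hab)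
        have h4 : (a : ℕ) = (b : ℕ) := by simpa using h3
        exact Fin.ext h4
      · exact absurd (hab ▸ A.orderEmbOfFin_mem hA (σ ⟨a, h1⟩))
          (by simpa using Aᶜ.orderEmbOfFin_mem (by rw [card_compl_fin, hA]) ⟨(b:ℕ) - j, by omega⟩)
      · exact absurd (hab ▸ Aᶜ.orderEmbOfFin_mem (by rw [card_compl_fin, hA]) ⟨(a:ℕ) - j, by omega⟩)
          (by simpa using A.orderEmbOfFin_mem hA (σ ⟨b, h2⟩))
      · have := (Aᶜ.orderEmbOfFin (by rw [card_compl_fin, hA])).injective hab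
        have := congrArg Fin.val this
        simp only at this
        have ha := a.isLt
        have hb := b.isLt
        exact Fin.ext (by omega)))

lemma phi_head (hjn : j ≤ n) (σ : Equiv.Perm (Fin j)) (A : Finset (Fin n)) (hA : A.card = j)
    (x : Fin n) (hx : (x : ℕ) < j) :
    phi hjn σ A hA x = A.orderEmbOfFin hA (σ ⟨x, hx⟩) := by
  show (if hx : (x : ℕ) < j then _ else _) = _
  rw [dif_pos hx]

lemma phi_tail (hjn : j ≤ n) (σ : Equiv.Perm (Fin j)) (A : Finset (Fin n)) (hA : A.card = j)
    (x : Fin n) (hx : ¬ (x : ℕ) < j) :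
    phi hjn σ A hA x
      = Aᶜ.orderEmbOfFin (by rw [card_compl_fin, hA]) ⟨(x:ℕ) - j, by have := x.isLt; omega⟩ := by
  show (if hx : (x : ℕ) < j then _ else _) = _
  rw [dif_neg hx]

lemma orderEmbOfFin_congr {α : Type*} [LinearOrder α] {s t : Finset α} (hst : s = t)
    (hs : s.card = j) (ht : t.card = j) (i : Fin j) :
    s.orderEmbOfFin hs i = t.orderEmbOfFin ht i := by subst hst; rfl

lemma headSet_phi (hjn : j ≤ n) (σ : Equiv.Perm (Fin j)) (A : Finset (Fin n)) (hA : A.card = j) :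
    headSet hjn (phi hjn σ A hA) = A := by
  apply Finset.eq_of_subset_of_card_le
  · intro x hx
    rw [headSet, mem_image] at hx
    obtain ⟨k, -, rfl⟩ := hx
    rw [phi_head hjn σ A hA _ (by simpa using k.isLt)]
    exact A.orderEmbOfFin_mem hA _
  · rw [card_headSet, hA]

lemma ptn_phi (hjn : j ≤ n) (σ : Equiv.Perm (Fin j)) (A : Finset (Fin n)) (hA : A.card = j) :
    ptn hjn (phi hjn σ A hA) = σ := by
  have hhs := headSet_phi hjn σ A hA
  ext k
  have h1 := ptn_spec hjn (phi hjn σ A hA) k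
  have h2 : phi hjn σ A hA (Fin.castLE hjn k) = A.orderEmbOfFin hA (σ k) := by
    rw [phi_head hjn σ A hA _ (by simpa using k.isLt)]
    congr 1
  rw [h2] at h1
  rw [orderEmbOfFin_congr hhs _ hA] at h1
  exact congrArg Fin.val ((A.orderEmbOfFin hA).injective h1)

lemma mem_invh_iff_s5 (h : ℕ → ℕ) {n : ℕ} (π : Equiv.Perm (Fin n)) (a b : ℕ) :
    (a, b) ∈ invh h π ↔ ∃ k l : Fin n, (k:ℕ) < (l:ℕ) ∧ (l:ℕ)+1 ≤ h ((k:ℕ)+1) ∧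
      π l < π k ∧ (k:ℕ)+1 = a ∧ (l:ℕ)+1 = b := by
  simp only [invh, Finset.mem_image, Finset.mem_filter, Finset.mem_univ, true_and,
    Prod.exists, Prod.mk.injEq]
  constructor
  · rintro ⟨k, l, ⟨h1, h2, h3⟩, h4, h5⟩
    exact ⟨k, l, h1, h2, h3, h4, h5⟩
  · rintro ⟨k, l, h1, h2, h3, h4, h5⟩
    exact ⟨k, l, ⟨h1, h2, h3⟩, h4, h5⟩

lemma invh_ptn (h : ℕ → ℕ) (hjn : j ≤ n) (π : Equiv.Perm (Fin n)) :
    invh h (ptn hjn π) = (invh h π).filter (fun p => p.2 ≤ j) := by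
  ext ⟨a, b⟩
  rw [Finset.mem_filter, mem_invh_iff_s5, mem_invh_iff_s5]
  constructor
  · rintro ⟨k, l, hkl, hw, hlt, rfl, rfl⟩
    refine ⟨⟨Fin.castLE hjn k, Fin.castLE hjn l, hkl, hw,
      (ptn_lt_iff hjn π l k).mp hlt, rfl, rfl⟩, ?_⟩
    have := l.isLt
    simp only [Finset.mem_filter]
    omega
  · rintro ⟨⟨k, l, hkl, hw, hlt, rfl, rfl⟩, hbj⟩
    simp only at hbj
    have hl : (l:ℕ) < j := by omega
    have hk : (k:ℕ) < j := by omega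
    have hcl : Fin.castLE hjn ⟨(l:ℕ), hl⟩ = l := Fin.ext rfl
    have hck : Fin.castLE hjn ⟨(k:ℕ), hk⟩ = k := Fin.ext rfl
    refine ⟨⟨(k:ℕ), hk⟩, ⟨(l:ℕ), hl⟩, hkl, hw, ?_, rfl, rfl⟩
    rw [ptn_lt_iff hjn π, hcl, hck]
    exact hlt

lemma tail_mono (h : ℕ → ℕ) (hgt : ∀ i : ℕ, 0 < i → i < h i) {S : Finset (ℕ × ℕ)}
    (hSj : ∀ p ∈ S, p.2 ≤ j) (π : Equiv.Perm (Fin n)) (hinv : invh h π = S) :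
    ∀ k l : Fin n, j ≤ (k:ℕ) → k < l → π k < π l := by
  have adj : ∀ m (hm : m + 1 < n), j ≤ m → π ⟨m, by omega⟩ < π ⟨m+1, hm⟩ := by
    intro m hm hjm
    by_contra hcon
    push_neg at hcon
    have hne : π ⟨m+1, hm⟩ ≠ π ⟨m, by omega⟩ := fun he => by
      have := congrArg Fin.val (π.injective he); simp at this
    have hlt : π ⟨m+1, hm⟩ < π ⟨m, by omega⟩ := lt_of_le_of_ne hcon hne
    have hmem : (m+1, m+2) ∈ invh h π := (mem_invh_iff_s5 h π _ _).mpr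
      ⟨⟨m, by omega⟩, ⟨m+1, hm⟩, by simp, by have := hgt (m+1) (by omega); simp; omega,
        hlt, rfl, rfl⟩
    rw [hinv] at hmem
    have := hSj _ hmem
    simp at this; omega
  have key : ∀ d m (h1 : j ≤ m) (h2 : m + d + 1 < n), π ⟨m, by omega⟩ < π ⟨m + d + 1, h2⟩ := by
    intro d
    induction d with
    | zero => intro m h1 h2; exact adj m (by omega) h1
    | succ d ih =>
      intro m h1 h2
      have step := adj (m + d + 1) (by omega) (by omega)
      have := ih m h1 (by omega)
      exact lt_trans this step
  intro k l hjk hkl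
  have hkl' : (k:ℕ) < (l:ℕ) := hkl
  have h2 : (k:ℕ) + ((l:ℕ) - (k:ℕ) - 1) + 1 < n := by have := l.isLt; omega
  have := key ((l:ℕ) - (k:ℕ) - 1) (k:ℕ) hjk h2
  have hk' : (⟨(k:ℕ), by omega⟩ : Fin n) = k := Fin.ext rfl
  have hl' : (⟨(k:ℕ) + ((l:ℕ) - (k:ℕ) - 1) + 1, h2⟩ : Fin n) = l := Fin.ext (by simp; omega)
  rwa [hk', hl'] at this

lemma strictMono_fin_le {a b : ℕ} {f : Fin a → Fin b} (hf : StrictMono f) (i : Fin a) :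
    (i:ℕ) ≤ (f i : ℕ) := by
  have key : ∀ m, ∀ i : Fin a, (i:ℕ) = m → m ≤ (f i : ℕ) := by
    intro m
    induction m with
    | zero => exact fun i _ => Nat.zero_le _
    | succ m ih =>
      intro i hi
      have hm : m < a := by omega
      have hprev : (⟨m, hm⟩ : Fin a) < i := by rw [Fin.lt_def]; simp; omega
      have h1 := ih ⟨m, hm⟩ rfl
      have h2 := hf hprev
      rw [Fin.lt_def] at h2
      omega
  exact key _ i rfl

lemma orderEmbOfFin_lt_of_cover {t : ℕ} (A : Finset (Fin n)) (hA : A.card = j)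
    (ht : ∀ x : Fin n, (x:ℕ) < t → x ∈ A) (r : Fin j) (hr : (r:ℕ) < t) :
    ((A.orderEmbOfFin hA r : Fin n) : ℕ) < t := by
  by_contra hcon
  push_neg at hcon
  have hrn : ((A.orderEmbOfFin hA r : Fin n) : ℕ) < n := (A.orderEmbOfFin hA r).isLt
  have hin : ∀ i : Fin t, (i:ℕ) < n := fun i => by have := i.isLt; omega
  set G : Fin t → Fin j := fun i => (A.orderIsoOfFin hA).symm
    ⟨⟨(i:ℕ), hin i⟩, ht _ (by simpa using i.isLt)⟩ with hG
  have hGA : ∀ i, A.orderEmbOfFin hA (G i) = (⟨(i:ℕ), hin i⟩ : Fin n) := by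
    intro i
    rw [← Finset.coe_orderIsoOfFin_apply, hG]
    simp
  have hGlt : ∀ i, (G i : ℕ) < (r : ℕ) := by
    intro i
    have h1 : A.orderEmbOfFin hA (G i) < A.orderEmbOfFin hA r := by
      rw [hGA, Fin.lt_def]
      have := i.isLt
      simp
      omega
    exact (A.orderEmbOfFin hA).lt_iff_lt.mp h1
  have hGinj : Function.Injective G := by
    intro x y hxy
    have := (A.orderIsoOfFin hA).symm.injective hxy
    have hv : ((x:ℕ) : ℕ) = (y:ℕ) := by
      have := congrArg (fun z => ((z : Fin n) : ℕ)) (congrArg Subtype.val this)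
      simpa using this
    exact Fin.ext hv
  have hle : t ≤ (r:ℕ) := by
    have := Fintype.card_le_of_injective
      (fun i : Fin t => (⟨(G i : ℕ), hGlt i⟩ : Fin (r:ℕ)))
      (fun x y hxy => by
        have hv := congrArg Fin.val hxy
        simp only at hv
        exact hGinj (Fin.ext hv))
    simpa using this
  omega

lemma phi_ptn (hjn : j ≤ n) (π : Equiv.Perm (Fin n))
    (htail : ∀ k l : Fin n, j ≤ (k:ℕ) → k < l → π k < π l) :
    phi hjn (ptn hjn π) (headSet hjn π) (card_headSet hjn π) = π := by
  apply Equiv.ext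
  intro x
  by_cases hx : (x:ℕ) < j
  · rw [phi_head _ _ _ _ x hx, ptn_spec hjn π ⟨(x:ℕ), hx⟩]
    congr 1
  · rw [phi_tail _ _ _ _ x hx]
    have hcB : ((headSet hjn π)ᶜ).card = n - j := by
      rw [card_compl_fin, card_headSet]
    set g : Fin (n - j) → Fin n := fun i => π ⟨j + (i:ℕ), by have := i.isLt; omega⟩ with hg
    have hgmem : ∀ i, g i ∈ (headSet hjn π)ᶜ := by
      intro i
      rw [Finset.mem_compl]
      intro hmem
      rw [headSet, Finset.mem_image] at hmem
      obtain ⟨k, -, hk⟩ := hmem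
      have h2 := congrArg Fin.val (π.injective hk)
      simp [hg] at h2
      have := k.isLt
      omega
    have hgmono : StrictMono g := by
      intro a b hab
      refine htail _ _ (by simp) (by rw [Fin.lt_def]; simp; omega)
    have huniq := Finset.orderEmbOfFin_unique hcB hgmem hgmono
    have hx2 : (x:ℕ) - j < n - j := by have := x.isLt; omega
    have h5 : ((headSet hjn π)ᶜ).orderEmbOfFin hcB ⟨(x:ℕ) - j, hx2⟩ = π x := by
      rw [← congrFun huniq ⟨(x:ℕ) - j, hx2⟩]
      have harg : (⟨j + ((x:ℕ) - j), by have := x.isLt; omega⟩ : Fin n) = x :=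
        Fin.ext (by simp; omega)
      calc g ⟨(x:ℕ) - j, hx2⟩
          = π ⟨j + ((x:ℕ) - j), by have := x.isLt; omega⟩ := rfl
        _ = π x := by rw [harg]
    exact h5

lemma cover_of_mem (h : ℕ → ℕ) (hgt : ∀ i : ℕ, 0 < i → i < h i) {S : Finset (ℕ × ℕ)}
    (hSj : ∀ p ∈ S, p.2 ≤ j) (hjn : j ≤ n) (π : Equiv.Perm (Fin n)) (hinv : invh h π = S)
    (x : Fin n) (k : ℕ) (hk1 : 1 ≤ k) (hkj : k ≤ j) (hw : j + 1 ≤ h k)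
    (hx : (x:ℕ) ≤ ((ptn hjn π ⟨k-1, by omega⟩ : Fin j) : ℕ)) : x ∈ headSet hjn π := by
  by_contra hxA
  have hl : j ≤ ((π.symm x : Fin n) : ℕ) := by
    by_contra hcon
    push_neg at hcon
    apply hxA
    rw [headSet, Finset.mem_image]
    refine ⟨⟨((π.symm x : Fin n) : ℕ), hcon⟩, Finset.mem_univ _, ?_⟩
    have hc : Fin.castLE hjn ⟨((π.symm x : Fin n) : ℕ), hcon⟩ = π.symm x := Fin.ext rfl
    rw [hc, Equiv.apply_symm_apply]
  have hjn' : j < n := lt_of_le_of_lt hl (π.symm x).isLt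
  have step1 : ((π ⟨j, hjn'⟩ : Fin n) : ℕ) ≤ (x:ℕ) := by
    rcases eq_or_lt_of_le hl with he | hlt
    · have he2 : π.symm x = ⟨j, hjn'⟩ := Fin.ext he.symm
      rw [← he2, Equiv.apply_symm_apply]
    · have h2 := tail_mono h hgt hSj π hinv ⟨j, hjn'⟩ (π.symm x) (le_refl j)
        (by rw [Fin.lt_def]; exact hlt)
      rw [Equiv.apply_symm_apply] at h2
      exact le_of_lt h2
  have hkidx : k - 1 < n := by omega
  have step2 : π ⟨k-1, hkidx⟩ < π ⟨j, hjn'⟩ := by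
    have hne : π ⟨k-1, hkidx⟩ ≠ π ⟨j, hjn'⟩ := fun he => by
      have := congrArg Fin.val (π.injective he)
      simp at this
      omega
    rcases lt_or_gt_of_ne hne with h' | h'
    · exact h'
    · exfalso
      have hmem : ((k-1)+1, j+1) ∈ invh h π := (mem_invh_iff_s5 h π _ _).mpr
        ⟨⟨k-1, hkidx⟩, ⟨j, hjn'⟩, by simp; omega, by
          show j + 1 ≤ h ((k-1) + 1)
          rw [show k - 1 + 1 = k from by omega]
          exact hw, h', rfl, rfl⟩
      rw [hinv] at hmem
      have := hSj _ hmem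
      simp at this
  have step3 : ((ptn hjn π ⟨k-1, by omega⟩ : Fin j) : ℕ) ≤ ((π ⟨k-1, hkidx⟩ : Fin n) : ℕ) := by
    have hspec := ptn_spec hjn π ⟨k-1, by omega⟩
    have hc : Fin.castLE hjn (⟨k-1, by omega⟩ : Fin j) = (⟨k-1, hkidx⟩ : Fin n) := Fin.ext rfl
    rw [hc] at hspec
    rw [← hspec]
    exact strictMono_fin_le ((headSet hjn π).orderEmbOfFin (card_headSet hjn π)).strictMono _
  rw [Fin.lt_def] at step2
  omega

lemma invh_phi (h : ℕ → ℕ) {S : Finset (ℕ × ℕ)} (hSj : ∀ p ∈ S, p.2 ≤ j) (hjn : j ≤ n)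
    (σ : Equiv.Perm (Fin j)) (hσ : invh h σ = S) (A : Finset (Fin n)) (hA : A.card = j)
    {t : ℕ} (ht : ∀ x : Fin n, (x:ℕ) < t → x ∈ A)
    (hcross : ∀ k : Fin j, j + 1 ≤ h ((k:ℕ)+1) → ((σ k : Fin j) : ℕ) < t) :
    invh h (phi hjn σ A hA) = S := by
  have h1 : (invh h (phi hjn σ A hA)).filter (fun p => p.2 ≤ j) = S := by
    rw [← invh_ptn h hjn (phi hjn σ A hA), ptn_phi, hσ]
  rw [← h1]
  symm
  apply Finset.filter_true_of_mem
  rintro ⟨a, b⟩ hp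
  rw [mem_invh_iff_s5] at hp
  obtain ⟨k, l, hkl, hw, hlt, rfl, rfl⟩ := hp
  simp only
  by_contra hcon
  push_neg at hcon
  have hlj : j ≤ (l:ℕ) := by omega
  refine absurd hlt (not_lt.mpr (le_of_lt ?_))
  by_cases hk : (k:ℕ) < j
  · have hπk := phi_head hjn σ A hA k hk
    have hπl_mem : phi hjn σ A hA l ∈ Aᶜ := by
      rw [phi_tail hjn σ A hA l (by omega)]
      exact Finset.orderEmbOfFin_mem _ _ _
    have h2 : ((σ ⟨(k:ℕ), hk⟩ : Fin j) : ℕ) < t := hcross ⟨(k:ℕ), hk⟩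
      (le_trans (by omega) hw)
    have h3 : ((phi hjn σ A hA k : Fin n) : ℕ) < t := by
      rw [hπk]
      exact orderEmbOfFin_lt_of_cover A hA ht _ h2
    have h4 : ¬ (((phi hjn σ A hA l : Fin n) : ℕ) < t) := fun hh =>
      (Finset.mem_compl.mp hπl_mem) (ht _ hh)
    rw [Fin.lt_def]
    omega
  · have hπk := phi_tail hjn σ A hA k hk
    have hπl := phi_tail hjn σ A hA l (by omega)
    rw [hπk, hπl]
    apply (Aᶜ.orderEmbOfFin _).strictMono
    rw [Fin.lt_def]
    simp
    omega

lemma card_filter_lt_fin {t : ℕ} (htn : t ≤ n) :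
    ((univ : Finset (Fin n)).filter fun x : Fin n => (x:ℕ) < t).card = t := by
  have himg : (univ : Finset (Fin t)).image (Fin.castLE htn)
      = (univ : Finset (Fin n)).filter fun x : Fin n => (x:ℕ) < t := by
    ext x
    simp only [Finset.mem_image, Finset.mem_filter, Finset.mem_univ, true_and]
    constructor
    · rintro ⟨k, -, rfl⟩
      exact k.isLt
    · intro hx
      exact ⟨⟨(x:ℕ), hx⟩, Fin.ext rfl⟩
  rw [← himg, Finset.card_image_of_injective _ (Fin.castLE_injective htn), card_univ,
    Fintype.card_fin]

lemma card_fiber {t : ℕ} (htj : t ≤ j) (hjn : j ≤ n) :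
    ((univ : Finset (Finset (Fin n))).filter fun A => A.card = j ∧
      ∀ x : Fin n, (x:ℕ) < t → x ∈ A).card = (n - t).choose (j - t) := by
  have htn : t ≤ n := le_trans htj hjn
  have hlow : ((univ : Finset (Fin n)).filter fun x : Fin n => (x:ℕ) < t).card = t :=
    card_filter_lt_fin htn
  have hhigh : ((univ : Finset (Fin n)).filter fun x : Fin n => ¬ (x:ℕ) < t).card = n - t := by
    have hq := Finset.card_filter_add_card_filter_not
      (s := (univ : Finset (Fin n))) (fun x : Fin n => (x:ℕ) < t)
    rw [hlow, card_univ, Fintype.card_fin] at hq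
    omega
  have hpc : (((univ : Finset (Fin n)).filter fun x : Fin n => ¬ (x:ℕ) < t).powersetCard (j - t)).card
      = (n - t).choose (j - t) := by
    rw [Finset.card_powersetCard, hhigh]
  rw [← hpc]
  apply Finset.card_bij' (fun A _ => A.filter (fun x : Fin n => ¬ (x:ℕ) < t))
    (fun B _ => B ∪ ((univ : Finset (Fin n)).filter fun x : Fin n => (x:ℕ) < t))
  · -- hi
    intro A hA
    rw [Finset.mem_filter] at hA
    obtain ⟨-, hcard, hcov⟩ := hA
    rw [Finset.mem_powersetCard]
    constructor
    · exact Finset.filter_subset_filter _ (Finset.subset_univ A)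
    · have h1 : A.filter (fun x : Fin n => (x:ℕ) < t) = (univ : Finset (Fin n)).filter fun x : Fin n => (x:ℕ) < t := by
        ext x
        simp only [Finset.mem_filter, Finset.mem_univ, true_and]
        exact ⟨fun hx => hx.2, fun hx => ⟨hcov x hx, hx⟩⟩
      have h2 := Finset.card_filter_add_card_filter_not
        (s := A) (fun x : Fin n => (x:ℕ) < t)
      rw [h1, hlow, hcard] at h2
      omega
  · -- hj
    intro B hB
    rw [Finset.mem_powersetCard] at hB
    obtain ⟨hBsub, hBcard⟩ := hB
    rw [Finset.mem_filter]
    have hdisj : Disjoint B ((univ : Finset (Fin n)).filter fun x : Fin n => (x:ℕ) < t) := by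
      rw [Finset.disjoint_left]
      intro x hxB hxlow
      have := hBsub hxB
      rw [Finset.mem_filter] at this hxlow
      exact this.2 hxlow.2
    refine ⟨Finset.mem_univ _, ?_, ?_⟩
    · rw [Finset.card_union_of_disjoint hdisj, hBcard, hlow]
      omega
    · intro x hx
      exact Finset.mem_union_right _ (Finset.mem_filter.mpr ⟨Finset.mem_univ _, hx⟩)
  · -- left_inv
    intro A hA
    rw [Finset.mem_filter] at hA
    obtain ⟨-, hcard, hcov⟩ := hA
    ext x
    simp only [Finset.mem_union, Finset.mem_filter, Finset.mem_univ, true_and]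
    constructor
    · rintro (⟨hx, -⟩ | hx)
      · exact hx
      · exact hcov x hx
    · intro hx
      by_cases hxt : (x:ℕ) < t
      · exact Or.inr hxt
      · exact Or.inl ⟨hx, hxt⟩
  · -- right_inv
    intro B hB
    rw [Finset.mem_powersetCard] at hB
    obtain ⟨hBsub, -⟩ := hB
    ext x
    simp only [Finset.mem_filter, Finset.mem_union, Finset.mem_univ, true_and]
    constructor
    · rintro ⟨hx | hx, hxt⟩
      · exact hx
      · exact absurd hx hxt
    · intro hx
      have := hBsub hx
      rw [Finset.mem_filter] at this
      exact ⟨Or.inl hx, this.2⟩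

end Aux

lemma tOf_le (h : ℕ → ℕ) (S : Finset (ℕ × ℕ)) (σ : Equiv.Perm (Fin (jS S))) :
    tOf h S σ ≤ jS S := by
  apply Finset.sup_le
  intro k hk
  unfold entry
  split_ifs with hk2
  · exact (σ ⟨k - 1, hk2⟩).isLt
  · exact Nat.zero_le _

lemma card_Ih (h : ℕ → ℕ) (hgt : ∀ i : ℕ, 0 < i → i < h i) (S : Finset (ℕ × ℕ)) {n : ℕ}
    (hjn : jS S ≤ n) :
    (Ih h S n).card
      = ∑ σ ∈ Ih h S (jS S), (n - tOf h S σ).choose (jS S - tOf h S σ) := by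
  classical
  have hSj : ∀ p ∈ S, p.2 ≤ jS S := fun p hp => Finset.le_sup hp
  have hT : ((Ih h S (jS S)).sigma (fun σ => (univ : Finset (Finset (Fin n))).filter
      fun A => A.card = jS S ∧ ∀ x : Fin n, (x:ℕ) < tOf h S σ → x ∈ A)).card
      = ∑ σ ∈ Ih h S (jS S), (n - tOf h S σ).choose (jS S - tOf h S σ) := by
    rw [Finset.card_sigma]
    exact Finset.sum_congr rfl (fun σ _ => card_fiber (tOf_le h S σ) hjn)
  rw [← hT]
  refine Finset.card_bij' (fun π _ => (⟨ptn hjn π, headSet hjn π⟩ :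
      Σ _ : Equiv.Perm (Fin (jS S)), Finset (Fin n)))
    (fun q hq => phi hjn q.1 q.2 ((Finset.mem_filter.mp (Finset.mem_sigma.mp hq).2).2.1))
    ?hi ?hj ?left ?right
  case hi =>
    intro π hπ
    have hinv : invh h π = S := (Finset.mem_filter.mp hπ).2
    rw [Finset.mem_sigma]
    constructor
    · rw [Ih, Finset.mem_filter]
      refine ⟨Finset.mem_univ _, ?_⟩
      rw [invh_ptn h hjn π, hinv]
      exact Finset.filter_true_of_mem hSj
    · rw [Finset.mem_filter]
      refine ⟨Finset.mem_univ _, card_headSet hjn π, ?_⟩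
      intro x hx
      rw [tOf, Finset.lt_sup_iff] at hx
      obtain ⟨k, hk, hxk⟩ := hx
      rw [Finset.mem_filter, Finset.mem_Icc] at hk
      obtain ⟨⟨hk1, hkj⟩, hw⟩ := hk
      have hk2 : k - 1 < jS S := by omega
      rw [entry, dif_pos hk2] at hxk
      refine cover_of_mem h hgt hSj hjn π hinv x k hk1 hkj hw ?_
      exact Nat.lt_succ_iff.mp hxk
  case hj =>
    intro q hq
    rw [Finset.mem_sigma] at hq
    obtain ⟨hq1, hq2⟩ := hq
    rw [Finset.mem_filter] at hq2
    obtain ⟨-, hcard, hcov⟩ := hq2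
    rw [Ih, Finset.mem_filter]
    refine ⟨Finset.mem_univ _, ?_⟩
    refine invh_phi (j := jS S) (n := n) (t := tOf h S q.1) h hSj hjn q.1
      ((Finset.mem_filter.mp hq1).2) q.2 hcard hcov ?_
    intro k hkw
    have hmem : (k:ℕ) + 1 ∈ ((Finset.Icc 1 (jS S)).filter fun m => jS S + 1 ≤ h m) := by
      rw [Finset.mem_filter, Finset.mem_Icc]
      exact ⟨⟨by omega, by have := k.isLt; omega⟩, hkw⟩
    have hle := Finset.le_sup (f := entry q.1) hmem
    have hk2 : (k:ℕ) + 1 - 1 < jS S := by have := k.isLt; omega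
    have hent : entry q.1 ((k:ℕ) + 1) = ((q.1 k : Fin (jS S)) : ℕ) + 1 := by
      rw [entry, dif_pos hk2]
      have hkeq : (⟨(k:ℕ) + 1 - 1, hk2⟩ : Fin (jS S)) = k :=
        Fin.ext (by show (k:ℕ) + 1 - 1 = (k:ℕ); omega)
      rw [hkeq]
    rw [hent] at hle
    rw [tOf]
    omega
  case left =>
    intro π hπ
    have hinv : invh h π = S := (Finset.mem_filter.mp hπ).2
    exact phi_ptn hjn π (tail_mono h hgt hSj π hinv)
  case right =>
    intro q hq
    rw [Finset.mem_sigma] at hq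
    obtain ⟨hq1, hq2⟩ := hq
    rw [Finset.mem_filter] at hq2
    exact Sigma.ext (ptn_phi hjn q.1 q.2 hq2.2.1) (heq_of_eq (headSet_phi hjn q.1 q.2 hq2.2.1))

/-- There is a rational polynomial agreeing with `𝓘_h(S;n)` for all `n ≥ j(S)`. -/
theorem stmt5 (h : ℕ → ℕ) (hmono : ∀ ⦃i j : ℕ⦄, 0 < i → i ≤ j → h i ≤ h j)
    (hgt : ∀ i : ℕ, 0 < i → i < h i) (S : Finset (ℕ × ℕ)) (hSne : S.Nonempty)
    (hadm : Admissible h S) :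
    ∃ p : Polynomial ℚ, ∀ n : ℕ, jS S ≤ n → p.eval (n : ℚ) = Icount h S n := by
  classical
  refine ⟨∑ σ ∈ Ih h S (jS S), (((jS S - tOf h S σ).factorial : ℚ))⁻¹ •
    ((descPochhammer ℚ (jS S - tOf h S σ)).comp
      (Polynomial.X - Polynomial.C (tOf h S σ : ℚ))), ?_⟩
  intro n hn
  rw [Icount, card_Ih h hgt S hn, Polynomial.eval_finset_sum, Nat.cast_sum]
  apply Finset.sum_congr rfl
  intro σ _
  have htj : tOf h S σ ≤ jS S := tOf_le h S σ
  have htn : tOf h S σ ≤ n := le_trans htj hn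
  rw [Polynomial.eval_smul, Polynomial.eval_comp, Polynomial.eval_sub, Polynomial.eval_X,
    Polynomial.eval_C]
  have hcast : (n : ℚ) - (tOf h S σ : ℚ) = ((n - tOf h S σ : ℕ) : ℚ) := by
    rw [Nat.cast_sub htn]
  rw [hcast, descPochhammer_eval_eq_descFactorial,
    Nat.descFactorial_eq_factorial_mul_choose, smul_eq_mul, Nat.cast_mul]
  rw [inv_mul_cancel_left₀ (by exact_mod_cast (jS S - tOf h S σ).factorial_ne_zero)]
end

section
/- Let S be a nonempty h-admissible set and m := m(S). For all n ≥ h(m), 𝓘_h(S;n) = Σ_{k=h(m)−m}^{h(m)} b_k(S) · C(n − k, h(m) − k), where b_k(S) := #{π ∈ I_h(S, h(m)) : π_{h(m)} = k}. -/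
open Finset

/-!
Write `H = h(m(S))`. Every pair of `S` ends at a position `≤ H`, and a permutation with
h-inversion set `S` has no descent after position `m(S)`, so its entries increase from position
`m(S) + 1` on. Hence, for `n ≥ H`, removing the last entry maps `I_h(S, n+1)` bijectively onto
the pairs `(σ, v)` with `σ ∈ I_h(S, n)` and `v` above the last entry of `σ`. If `gap σ` counts
the values exceeding the last entry of `σ`, there are `gap σ + 1` choices of `v`, and the gaps
they produce are `0, …, gap σ`. Iterating with the hockey-stick identity gives
`𝓘_h(S; H + r) = Σ_{σ ∈ I_h(S, H)} C(gap σ + r, r)`, and grouping `σ` by its last entry `k`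
(so that `gap σ = H - k`) gives the formula.
-/

namespace HInversions

open Equiv

section Entry

variable {n : ℕ}

lemma entry_succ (π : Perm (Fin n)) (i : Fin n) : entry π (i + 1) = π i + 1 := by
  simp [entry]

lemma exists_fin_eq_add_one {k : ℕ} (hk : k ∈ Icc 1 n) : ∃ i : Fin n, k = i + 1 := by
  obtain ⟨hk1, hkn⟩ := mem_Icc.mp hk
  exact ⟨⟨k - 1, by omega⟩, by simp; omega⟩

lemma entry_mem_Icc (π : Perm (Fin n)) {k : ℕ} (hk : k ∈ Icc 1 n) :
    entry π k ∈ Icc 1 n := by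
  obtain ⟨i, rfl⟩ := exists_fin_eq_add_one hk
  simp [entry_succ]

lemma entry_le (π : Perm (Fin n)) (k : ℕ) : entry π k ≤ n := by
  unfold entry
  split_ifs <;> omega

lemma entry_injOn (π : Perm (Fin n)) : Set.InjOn (entry π) (Icc 1 n) := by
  intro a ha b hb hab
  obtain ⟨i, rfl⟩ := exists_fin_eq_add_one ha
  obtain ⟨j, rfl⟩ := exists_fin_eq_add_one hb
  simp only [entry_succ, Nat.add_right_cancel_iff, Fin.val_inj, π.injective.eq_iff] at hab
  rw [hab]

lemma mem_invh_iff (h : ℕ → ℕ) (π : Perm (Fin n)) (q : ℕ × ℕ) :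
    q ∈ invh h π ↔
      0 < q.1 ∧ q.1 < q.2 ∧ q.2 ≤ n ∧ q.2 ≤ h q.1 ∧ entry π q.2 < entry π q.1 := by
  simp only [invh, mem_image, mem_filter, mem_univ, true_and]
  constructor
  · rintro ⟨⟨i, j⟩, ⟨hij, hh, hπ⟩, rfl⟩
    dsimp only at hij hh hπ
    simp only [entry_succ]
    exact ⟨by omega, by omega, j.isLt, hh, by simpa using hπ⟩
  · obtain ⟨a, b⟩ := q
    rintro ⟨ha, hab, hb, hh, hπ⟩
    dsimp only at ha hab hb hh hπ
    obtain ⟨i, rfl⟩ := exists_fin_eq_add_one (n := n) (mem_Icc.2 ⟨ha, by omega⟩)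
    obtain ⟨j, rfl⟩ := exists_fin_eq_add_one (n := n) (mem_Icc.2 ⟨by omega, hb⟩)
    simp only [entry_succ, add_lt_add_iff_right, Fin.val_fin_lt] at hπ
    exact ⟨(i, j), ⟨(by omega : (i : ℕ) < j), hh, hπ⟩, rfl⟩

end Entry

section Insert

variable {n : ℕ}

/-- Append the value `v` at the end of `σ`, shifting the values `≥ v` of `σ` up by one. -/
def ins (σ : Perm (Fin n)) (v : Fin (n + 1)) : Perm (Fin (n + 1)) :=
  finSuccEquivLast.trans (σ.optionCongr.trans (finSuccEquiv' v).symm)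

/-- Remove the last entry of `π` and standardize the remaining ones; inverse to `ins`. -/
def del (π : Perm (Fin (n + 1))) : Perm (Fin n) :=
  removeNone (finSuccEquivLast.symm.trans (π.trans (finSuccEquiv' (π (Fin.last n)))))

@[simp]
lemma ins_castSucc (σ : Perm (Fin n)) (v : Fin (n + 1)) (i : Fin n) :
    ins σ v i.castSucc = v.succAbove (σ i) := by
  simp [ins, finSuccEquivLast_castSucc]

@[simp]
lemma ins_last (σ : Perm (Fin n)) (v : Fin (n + 1)) : ins σ v (Fin.last n) = v := by
  simp [ins, finSuccEquivLast_last]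

lemma succAbove_del (π : Perm (Fin (n + 1))) (i : Fin n) :
    (π (Fin.last n)).succAbove (del π i) = π i.castSucc := by
  set E := finSuccEquivLast.symm.trans (π.trans (finSuccEquiv' (π (Fin.last n))))
  change (π (Fin.last n)).succAbove (removeNone E i) = _
  have hE : E (some i) = finSuccEquiv' (π (Fin.last n)) (π i.castSucc) := by
    simp [E, finSuccEquivLast_symm_some]
  have hnone : E (some i) ≠ none := by
    rw [← show E none = none by simp [E]]
    exact E.injective.ne (by simp)
  have key := removeNone_some E (Option.ne_none_iff_exists'.mp hnone)
  rw [hE] at key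
  simpa using congrArg (finSuccEquiv' (π (Fin.last n))).symm key

@[simp]
lemma del_ins (σ : Perm (Fin n)) (v : Fin (n + 1)) : del (ins σ v) = σ := by
  ext i
  have := succAbove_del (ins σ v) i
  simp only [ins_last, ins_castSucc] at this
  rw [Fin.succAbove_right_injective this]

@[simp]
lemma ins_del (π : Perm (Fin (n + 1))) : ins (del π) (π (Fin.last n)) = π := by
  ext x
  induction x using Fin.lastCases with
  | last => simp
  | cast i => simp [succAbove_del]

lemma entry_ins_last (σ : Perm (Fin n)) (v : Fin (n + 1)) : entry (ins σ v) (n + 1) = v + 1 := by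
  simpa using entry_succ (ins σ v) (Fin.last n)

lemma entry_ins_of_le (σ : Perm (Fin n)) (v : Fin (n + 1)) {k : ℕ} (hk : k ∈ Icc 1 n) :
    entry (ins σ v) k = if entry σ k ≤ v then entry σ k else entry σ k + 1 := by
  obtain ⟨i, rfl⟩ := exists_fin_eq_add_one hk
  have := entry_succ (ins σ v) i.castSucc
  simp only [Fin.val_castSucc, ins_castSucc] at this
  rw [this, entry_succ, Fin.succAbove]
  split_ifs <;> simp_all [Fin.lt_def]; omega

end Insert

lemma exists_succ_lt_of_lt {α : Type*} [LinearOrder α] {f : ℕ → α} {a b : ℕ}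
    (hab : a ≤ b) (hba : f b < f a) : ∃ p, a ≤ p ∧ p < b ∧ f (p + 1) < f p := by
  induction b, hab using Nat.le_induction with
  | base => exact absurd hba (lt_irrefl _)
  | succ b hab ih =>
    rcases lt_or_ge (f b) (f a) with hb | hb
    · obtain ⟨p, hap, hpb, hp⟩ := ih hb
      exact ⟨p, hap, by omega, hp⟩
    · exact ⟨b, hab, by omega, hba.trans_le hb⟩

lemma add_sub_le_of_lt_succ {f : ℕ → ℕ} {a b : ℕ} (hab : a ≤ b)
    (hf : ∀ p, a ≤ p → p < b → f p < f (p + 1)) : f a + (b - a) ≤ f b := by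
  induction b, hab using Nat.le_induction with
  | base => simp
  | succ b hab ih =>
    have := ih fun p hap hpb => hf p hap (by omega)
    have := hf b hab (by omega)
    omega

section Structure

variable {h : ℕ → ℕ} {S : Finset (ℕ × ℕ)} {n : ℕ} {π : Perm (Fin n)}

lemma le_mS_of_entry_lt (hgt : ∀ i : ℕ, 0 < i → i < h i) (hπ : invh h π = S) {p : ℕ}
    (hp : 0 < p) (hpn : p < n) (hd : entry π (p + 1) < entry π p) : p ≤ mS S := by
  have hmem : (p, p + 1) ∈ S :=
    hπ ▸ (mem_invh_iff h π _).2 ⟨hp, by omega, hpn, hgt p hp, hd⟩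
  exact le_sup (f := Prod.fst) (s := S.filter fun q => q.2 = q.1 + 1) (mem_filter.2 ⟨hmem, rfl⟩)

lemma snd_le_of_mem (hmono : ∀ ⦃i j : ℕ⦄, 0 < i → i ≤ j → h i ≤ h j)
    (hgt : ∀ i : ℕ, 0 < i → i < h i) (hπ : invh h π = S) {q : ℕ × ℕ} (hq : q ∈ S) :
    q.2 ≤ h (mS S) := by
  obtain ⟨h0, h12, h2n, h2h, hlt⟩ := (mem_invh_iff h π q).1 (hπ ▸ hq)
  obtain ⟨p, hp1, hp2, hd⟩ := exists_succ_lt_of_lt h12.le hlt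
  have hpm := le_mS_of_entry_lt hgt hπ (by omega) (by omega) hd
  exact h2h.trans (hmono h0 (hp1.trans hpm))

lemma entry_add_sub_le (hgt : ∀ i : ℕ, 0 < i → i < h i) (hπ : invh h π = S) {a b : ℕ}
    (ha : mS S < a) (hab : a ≤ b) (hb : b ≤ n) : entry π a + (b - a) ≤ entry π b := by
  refine add_sub_le_of_lt_succ hab fun p hap hpb => ?_
  have hne : entry π p ≠ entry π (p + 1) := fun he =>
    absurd (entry_injOn π (by simp; omega) (by simp; omega) he) (by omega)
  by_contra hle
  have := le_mS_of_entry_lt (p := p) hgt hπ (by omega) (by omega) (by omega)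
  omega

end Structure

section Extension

variable {h : ℕ → ℕ} {S : Finset (ℕ × ℕ)} {n : ℕ}

lemma mem_invh_ins_iff_of_le (σ : Perm (Fin n)) (v : Fin (n + 1)) {q : ℕ × ℕ}
    (hq : q.2 ≤ n) :
    q ∈ invh h (ins σ v) ↔ q ∈ invh h σ := by
  simp only [mem_invh_iff]
  refine and_congr_right fun h0 => and_congr_right fun h12 => ?_
  rw [entry_ins_of_le σ v (mem_Icc.2 ⟨by omega, hq⟩),
    entry_ins_of_le σ v (mem_Icc.2 ⟨h0, by omega⟩)]
  constructor <;> rintro ⟨-, h2h, hlt⟩ <;> refine ⟨by omega, h2h, ?_⟩ <;>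
    split_ifs at hlt ⊢ <;> omega

lemma invh_ins_eq_iff (hmono : ∀ ⦃i j : ℕ⦄, 0 < i → i ≤ j → h i ≤ h j)
    (hgt : ∀ i : ℕ, 0 < i → i < h i) (hn : h (mS S) ≤ n) (σ : Perm (Fin n))
    (v : Fin (n + 1)) :
    invh h (ins σ v) = S ↔ invh h σ = S ∧ entry σ n ≤ v := by
  constructor
  · intro hS
    refine ⟨?_, ?_⟩
    · ext q
      by_cases hq : q.2 ≤ n
      · rw [← mem_invh_ins_iff_of_le σ v hq, hS]
      · exact iff_of_false (fun hmem => hq ((mem_invh_iff h σ q).1 hmem).2.2.1)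
          fun hmem => hq ((snd_le_of_mem hmono hgt hS hmem).trans hn)
    · by_contra! hlt
      have hn0 : 0 < n := by
        by_contra hn0
        simp [show n = 0 by omega, entry] at hlt
      have hd : entry (ins σ v) (n + 1) < entry (ins σ v) n := by
        rw [entry_ins_last, entry_ins_of_le σ v (mem_Icc.2 ⟨hn0, le_rfl⟩), if_neg (by omega)]
        omega
      have hnm := le_mS_of_entry_lt hgt hS hn0 (by omega) hd
      have := hgt (mS S) (by omega)
      omega
  · rintro ⟨hσ, hv⟩
    ext ⟨a, b⟩
    by_cases hq : b ≤ n
    · rw [mem_invh_ins_iff_of_le σ v hq, hσ]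
    refine iff_of_false (fun hmem => ?_)
      fun hmem => hq ((snd_le_of_mem hmono hgt hσ hmem).trans hn)
    obtain ⟨h0, h12, h2n, h2h, hlt⟩ := (mem_invh_iff h _ _).1 hmem
    dsimp only at h0 h12 h2n h2h hlt
    obtain rfl : b = n + 1 := by omega
    have hm : mS S < a := by
      by_contra! hle
      have := hmono h0 hle
      omega
    have := entry_add_sub_le hgt hσ hm (by omega : a ≤ n) le_rfl
    rw [entry_ins_last, entry_ins_of_le σ v (mem_Icc.2 ⟨h0, by omega⟩), if_pos (by omega)]
      at hlt
    omega

end Extension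

section Counting

variable {h : ℕ → ℕ} {S : Finset (ℕ × ℕ)} {n : ℕ}

def gap (π : Perm (Fin n)) : ℕ := n - entry π n

lemma gap_ins (σ : Perm (Fin n)) (v : Fin (n + 1)) : gap (ins σ v) = n - v := by
  rw [gap, entry_ins_last]
  omega

lemma sum_range_gap_succ (σ : Perm (Fin n)) (φ : ℕ → ℕ) :
    ∑ i ∈ range (gap σ + 1), φ i =
      ∑ v ∈ (univ.filter fun v : Fin (n + 1) => entry σ n ≤ v), φ (n - v) := by
  have := entry_le σ n
  refine sum_nbij' (fun i => ⟨n - i, by omega⟩) (fun v => n - v) ?_ ?_ ?_ ?_ ?_ <;>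
    simp only [gap, mem_range, mem_filter, mem_univ, true_and, Fin.ext_iff]
  · intro i hi; omega
  · intro v hv; omega
  · intro i hi; omega
  · intro v hv; omega
  · intro i hi; rw [Nat.sub_sub_self (by omega)]

lemma sum_Ih_succ (hmono : ∀ ⦃i j : ℕ⦄, 0 < i → i ≤ j → h i ≤ h j)
    (hgt : ∀ i : ℕ, 0 < i → i < h i) (hn : h (mS S) ≤ n) (φ : ℕ → ℕ) :
    ∑ π ∈ Ih h S (n + 1), φ (gap π) =
      ∑ σ ∈ Ih h S n, ∑ i ∈ range (gap σ + 1), φ i := by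
  simp_rw [sum_range_gap_succ]
  rw [← sum_finset_product
    ((Ih h S n ×ˢ univ).filter fun p : _ × Fin (n + 1) => entry p.1 n ≤ p.2)
    _ (fun σ => univ.filter fun v : Fin (n + 1) => entry σ n ≤ v) (by simp)
    (f := fun p => φ (n - p.2))]
  refine sum_nbij' (fun π => (del π, π (Fin.last n))) (fun p => ins p.1 p.2) ?_ ?_ ?_ ?_ ?_
  · intro π hπ
    rw [Ih, mem_filter, ← ins_del π, invh_ins_eq_iff hmono hgt hn] at hπ
    simpa [Ih] using hπ.2
  · rintro ⟨σ, v⟩ hp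
    simpa [Ih, invh_ins_eq_iff hmono hgt hn] using hp
  · intro π _
    simp
  · rintro ⟨σ, v⟩ _
    simp
  · intro π _
    conv_lhs => rw [← ins_del π]
    rw [gap_ins]

lemma sum_Ih_choose_gap (hmono : ∀ ⦃i j : ℕ⦄, 0 < i → i ≤ j → h i ≤ h j)
    (hgt : ∀ i : ℕ, 0 < i → i < h i) (r j : ℕ) :
    ∑ π ∈ Ih h S (h (mS S) + r), (gap π + j).choose j =
      ∑ σ ∈ Ih h S (h (mS S)), (gap σ + r + j).choose (r + j) := by
  induction r generalizing j with
  | zero => simp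
  | succ r ih =>
    rw [← add_assoc, sum_Ih_succ hmono hgt (by omega) fun g => (g + j).choose j]
    simp_rw [Nat.sum_range_add_choose, add_assoc, ih]
    refine sum_congr rfl fun σ _ => ?_
    congr 1 <;> omega

end Counting

lemma entry_mem_Icc_of_invh_eq {h : ℕ → ℕ} {S : Finset (ℕ × ℕ)}
    (hgt : ∀ i : ℕ, 0 < i → i < h i) {π : Perm (Fin (h (mS S)))} (hπ : invh h π = S) :
    entry π (h (mS S)) ∈ Icc (h (mS S) - mS S) (h (mS S)) := by
  refine mem_Icc.2 ⟨?_, entry_le π _⟩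
  rcases Nat.eq_zero_or_pos (h (mS S)) with hH | hH
  · omega
  have hmH : mS S + 1 ≤ h (mS S) := by
    rcases Nat.eq_zero_or_pos (mS S) with hm | hm
    · omega
    · exact hgt _ hm
  have := entry_add_sub_le hgt hπ (Nat.lt_add_one _) hmH le_rfl
  have := (mem_Icc.1 (entry_mem_Icc π (mem_Icc.2 ⟨by omega, hmH⟩))).1
  omega

end HInversions

open HInversions

theorem stmt7_general (h : ℕ → ℕ) (hmono : ∀ ⦃i j : ℕ⦄, 0 < i → i ≤ j → h i ≤ h j)
    (hgt : ∀ i : ℕ, 0 < i → i < h i) (S : Finset (ℕ × ℕ))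
    (n : ℕ) (hn : h (mS S) ≤ n) :
    Icount h S n =
      ∑ k ∈ Finset.Icc (h (mS S) - mS S) (h (mS S)),
        bCoeff h S k * Nat.choose (n - k) (h (mS S) - k) := by
  obtain ⟨r, rfl⟩ := Nat.exists_eq_add_of_le hn
  have hsupp : ∀ σ ∈ Ih h S (h (mS S)),
      entry σ (h (mS S)) ∈ Icc (h (mS S) - mS S) (h (mS S)) :=
    fun σ hσ => entry_mem_Icc_of_invh_eq hgt (mem_filter.1 hσ).2
  calc Icount h S (h (mS S) + r)
      = ∑ σ ∈ Ih h S (h (mS S)), (gap σ + r).choose r := by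
        simpa [Icount] using sum_Ih_choose_gap hmono hgt r 0
    _ = ∑ k ∈ Icc (h (mS S) - mS S) (h (mS S)),
          ∑ σ ∈ Ih h S (h (mS S)) with entry σ (h (mS S)) = k, (gap σ + r).choose r :=
        (sum_fiberwise_of_maps_to hsupp _).symm
    _ = _ := sum_congr rfl fun k hk => by
        rw [mem_Icc] at hk
        rw [sum_const_nat fun σ hσ => by rw [gap, (mem_filter.1 hσ).2],
          show h (mS S) + r - k = h (mS S) - k + r by omega, Nat.choose_symm_add]
        rfl

/-- For `n ≥ h(m)`, `𝓘_h(S;n) = Σ_{k=h(m)−m}^{h(m)} b_k(S) · C(n−k, h(m)−k)`. -/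
theorem stmt7 (h : ℕ → ℕ) (hmono : ∀ ⦃i j : ℕ⦄, 0 < i → i ≤ j → h i ≤ h j)
    (hgt : ∀ i : ℕ, 0 < i → i < h i) (S : Finset (ℕ × ℕ)) (hSne : S.Nonempty)
    (hadm : Admissible h S) (n : ℕ) (hn : h (mS S) ≤ n) :
    Icount h S n =
      ∑ k ∈ Finset.Icc (h (mS S) - mS S) (h (mS S)),
        bCoeff h S k * Nat.choose (n - k) (h (mS S) - k) :=
  stmt7_general h hmono hgt S n hn
end
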